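/- arXiv:2111.07312 — 7 statements merged into one kernel-verified Lean document; each statement's English description precedes it below -/
import Mathlib

section
/- Let V be a Banach space, K ⊂ V* a nonempty set which is norm separable, convex, and weak*-compact, and let G be a group of linear isometries of V whose dual action preserves K. Then there exists x₀ ∈ K with g·x₀ = x₀ for every g ∈ G. -/
open NormedSpace

/-- The dual action of a linear isometric automorphism `e` of `V` on the dual space:
`(e · φ)(v) = φ(e⁻¹ v)`. -/
noncomputable def dualAct {V : Type*} [NormedAddCommGroup V] [NormedSpace ℝ V]
    (e : V ≃ₗᵢ[ℝ] V) (φ : StrongDual ℝ V) : StrongDual ℝ V :=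
  φ.comp (e.symm.toContinuousLinearEquiv : V →L[ℝ] V)

set_option linter.unusedSectionVars false

namespace Stmt2Aux
open Set



variable {E : Type*} [AddCommGroup E] [Module ℝ E] [TopologicalSpace E]

/-- The `r`-truncated convex join of `A` and `B`. -/
def cjoin (r : ℝ) (A B : Set E) : Set E :=
  (fun p : ℝ × E × E => p.1 • p.2.1 + (1 - p.1) • p.2.2) '' ((Icc r 1) ×ˢ (A ×ˢ B))

theorem mem_cjoin_iff {r : ℝ} {A B : Set E} {x : E} :
    x ∈ cjoin r A B ↔ ∃ t, r ≤ t ∧ t ≤ 1 ∧ ∃ a ∈ A, ∃ b ∈ B, t • a + (1 - t) • b = x := by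
  constructor
  · rintro ⟨⟨t, a, b⟩, ⟨⟨ht1, ht2⟩, ha, hb⟩, rfl⟩
    exact ⟨t, ht1, ht2, a, ha, b, hb, rfl⟩
  · rintro ⟨t, ht1, ht2, a, ha, b, hb, rfl⟩
    exact ⟨⟨t, a, b⟩, ⟨⟨ht1, ht2⟩, ha, hb⟩, rfl⟩

theorem cjoin_isCompact [IsTopologicalAddGroup E] [ContinuousSMul ℝ E] {r : ℝ} {A B : Set E}
    (hA : IsCompact A) (hB : IsCompact B) : IsCompact (cjoin r A B) := by
  apply IsCompact.image (isCompact_Icc.prod (hA.prod hB))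
  fun_prop

theorem cjoin_subset {r : ℝ} {A B C : Set E} (hr : 0 ≤ r) (hA : A ⊆ C) (hB : B ⊆ C)
    (hC : Convex ℝ C) : cjoin r A B ⊆ C := by
  rintro x hx
  rw [mem_cjoin_iff] at hx
  obtain ⟨t, ht1, ht2, a, ha, b, hb, rfl⟩ := hx
  exact hC (hA ha) (hB hb) (le_trans hr ht1) (by linarith) (by ring)

theorem subset_cjoin_left {r : ℝ} {A B : Set E} (hr : r ≤ 1) (hB : B.Nonempty) :
    A ⊆ cjoin r A B := by
  intro a ha
  obtain ⟨b, hb⟩ := hB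
  exact mem_cjoin_iff.2 ⟨1, hr, le_refl _, a, ha, b, hb, by simp⟩

theorem subset_cjoin_right {A B : Set E} (hA : A.Nonempty) : B ⊆ cjoin 0 A B := by
  intro b hb
  obtain ⟨a, ha⟩ := hA
  exact mem_cjoin_iff.2 ⟨0, le_refl _, zero_le_one, a, ha, b, hb, by simp⟩

theorem cjoin_mono {r : ℝ} {A B : Set E} (hr : 0 ≤ r) : cjoin r A B ⊆ cjoin 0 A B := by
  rintro x hx
  rw [mem_cjoin_iff] at hx ⊢
  obtain ⟨t, ht1, ht2, h⟩ := hx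
  exact ⟨t, le_trans hr ht1, ht2, h⟩

set_option maxHeartbeats 1000000 in
theorem cjoin_convex {r : ℝ} {A B : Set E} (hr0 : 0 ≤ r) (hA : Convex ℝ A) (hB : Convex ℝ B)
    (hAne : A.Nonempty) (hBne : B.Nonempty) : Convex ℝ (cjoin r A B) := by
  rintro x hx y hy p q hp hq hpq
  rw [mem_cjoin_iff] at hx hy ⊢
  obtain ⟨t₁, ht₁r, ht₁1, a₁, ha₁, b₁, hb₁, rfl⟩ := hx
  obtain ⟨t₂, ht₂r, ht₂1, a₂, ha₂, b₂, hb₂, rfl⟩ := hy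
  set T := p * t₁ + q * t₂ with hT
  have ht₁0 : 0 ≤ t₁ := le_trans hr0 ht₁r
  have ht₂0 : 0 ≤ t₂ := le_trans hr0 ht₂r
  have hTr : r ≤ T := by nlinarith
  have hT1 : T ≤ 1 := by nlinarith
  have hT0 : 0 ≤ T := le_trans hr0 hTr
  rcases eq_or_lt_of_le hT0 with hTz | hTpos
  · -- T = 0 : both p*t₁ = 0 and q*t₂ = 0
    have h1 : p * t₁ = 0 := by nlinarith [mul_nonneg hp ht₁0, mul_nonneg hq ht₂0]
    have h2 : q * t₂ = 0 := by nlinarith [mul_nonneg hp ht₁0, mul_nonneg hq ht₂0]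
    obtain ⟨a, ha⟩ := hAne
    refine ⟨0, le_trans hTr hTz.symm.le, zero_le_one, a, ha, p • b₁ + q • b₂,
      hB hb₁ hb₂ hp hq hpq, ?_⟩
    match_scalars <;> linarith [h1, h2]
  · rcases eq_or_lt_of_le hT1 with hTone | hTlt
    · -- T = 1
      have ha' : (0:ℝ) ≤ 1 - t₁ := by linarith
      have hb' : (0:ℝ) ≤ 1 - t₂ := by linarith
      have h1 : p * (1 - t₁) = 0 := by nlinarith [mul_nonneg hp ha', mul_nonneg hq hb']
      have h2 : q * (1 - t₂) = 0 := by nlinarith [mul_nonneg hp ha', mul_nonneg hq hb']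
      obtain ⟨b, hb⟩ := hBne
      refine ⟨1, le_trans hTr hTone.le, le_refl _, (p * t₁) • a₁ + (q * t₂) • a₂,
        hA ha₁ ha₂ (mul_nonneg hp ht₁0) (mul_nonneg hq ht₂0) hTone, b, hb, ?_⟩
      match_scalars <;> linarith [h1, h2]
    · -- 0 < T < 1
      have hT1' : (0:ℝ) < 1 - T := by linarith
      refine ⟨T, hTr, hT1,
        (p * t₁ / T) • a₁ + (q * t₂ / T) • a₂,
        hA ha₁ ha₂ (div_nonneg (mul_nonneg hp ht₁0) hT0) (div_nonneg (mul_nonneg hq ht₂0) hT0)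
          (by field_simp; linarith),
        (p * (1 - t₁) / (1 - T)) • b₁ + (q * (1 - t₂) / (1 - T)) • b₂,
        hB hb₁ hb₂ (div_nonneg (mul_nonneg hp (by linarith)) hT1'.le)
          (div_nonneg (mul_nonneg hq (by linarith)) hT1'.le) (by field_simp; linarith), ?_⟩
      match_scalars <;> (field_simp; try ring)

theorem extreme_cjoin_aux {t : ℝ} {A B C : Set E} (ht0 : 0 < t) (hA : A ⊆ C) (hB : B ⊆ C)
    {e a b : E} (ha : a ∈ A) (hb : b ∈ B) (he : e ∈ C.extremePoints ℝ) (ht1 : t ≤ 1)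
    (hab : t • a + (1 - t) • b = e) : e ∈ A := by
  rcases eq_or_lt_of_le ht1 with h1 | h1
  · have : a = e := by rw [h1] at hab; simpa using hab
    exact this ▸ ha
  · have hseg : e ∈ openSegment ℝ a b := ⟨t, 1 - t, ht0, by linarith, by ring, hab⟩
    obtain ⟨h₁, h₂⟩ := (mem_extremePoints.1 he).2 _ (hA ha) _ (hB hb) hseg
    exact h₁ ▸ ha

theorem extreme_cjoin_union {r : ℝ} {A B C : Set E} (hr : 0 ≤ r) (hA : A ⊆ C) (hB : B ⊆ C)
    {e : E} (he : e ∈ C.extremePoints ℝ) (hx : e ∈ cjoin r A B) : e ∈ A ∪ B := by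
  rw [mem_cjoin_iff] at hx
  obtain ⟨t, htr, ht1, a, ha, b, hb, hab⟩ := hx
  rcases eq_or_lt_of_le (le_trans hr htr) with ht0 | ht0
  · have : b = e := by rw [← ht0] at hab; simpa using hab
    exact Or.inr (this ▸ hb)
  · exact Or.inl (extreme_cjoin_aux ht0 hA hB ha hb he ht1 hab)

theorem extreme_cjoin_pos {r : ℝ} {A B C : Set E} (hr : 0 < r) (hA : A ⊆ C) (hB : B ⊆ C)
    {e : E} (he : e ∈ C.extremePoints ℝ) (hx : e ∈ cjoin r A B) : e ∈ A := by
  rw [mem_cjoin_iff] at hx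
  obtain ⟨t, htr, ht1, a, ha, b, hb, hab⟩ := hx
  exact extreme_cjoin_aux (lt_of_lt_of_le hr htr) hA hB ha hb he ht1 hab


section Milman
variable {E : Type*} [AddCommGroup E] [Module ℝ E] [TopologicalSpace E]
  [T2Space E] [IsTopologicalAddGroup E] [ContinuousSMul ℝ E] [LocallyConvexSpace ℝ E]

theorem exists_join {C : Set E} (hCconv : Convex ℝ C) {ι : Type*} (t : Finset ι)
    (A : ι → Set E) (hA : ∀ i ∈ t, IsCompact (A i) ∧ Convex ℝ (A i) ∧ A i ⊆ C ∧ (A i).Nonempty) :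
    ∃ J : Set E, IsCompact J ∧ Convex ℝ J ∧ J ⊆ C ∧ (∀ i ∈ t, A i ⊆ J) ∧
      ∀ e ∈ C.extremePoints ℝ, e ∈ J → ∃ i ∈ t, e ∈ A i := by
  classical
  induction t using Finset.induction_on with
  | empty => exact ⟨∅, isCompact_empty, convex_empty, empty_subset _, by simp, by simp⟩
  | @insert i s his IH =>
    obtain ⟨J', hJ'comp, hJ'conv, hJ'C, hJ'sub, hJ'ext⟩ :=
      IH (fun j hj => hA j (Finset.mem_insert_of_mem hj))
    obtain ⟨hAi_comp, hAi_conv, hAi_C, hAi_ne⟩ := hA i (Finset.mem_insert_self i s)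
    rcases s.eq_empty_or_nonempty with rfl | hs
    · refine ⟨A i, hAi_comp, hAi_conv, hAi_C, ?_, ?_⟩
      · intro j hj
        rcases Finset.mem_insert.1 hj with rfl | hj
        · exact subset_rfl
        · simp at hj
      · intro e he heJ; exact ⟨i, Finset.mem_insert_self i _, heJ⟩
    · have hJ'ne : J'.Nonempty := by
        obtain ⟨j, hj⟩ := hs
        obtain ⟨x, hx⟩ := (hA j (Finset.mem_insert_of_mem hj)).2.2.2
        exact ⟨x, hJ'sub j hj hx⟩
      refine ⟨cjoin 0 (A i) J', cjoin_isCompact hAi_comp hJ'comp,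
        cjoin_convex le_rfl hAi_conv hJ'conv hAi_ne hJ'ne,
        cjoin_subset le_rfl hAi_C hJ'C hCconv, ?_, ?_⟩
      · intro j hj
        rcases Finset.mem_insert.1 hj with rfl | hj
        · exact subset_cjoin_left zero_le_one hJ'ne
        · exact (hJ'sub j hj).trans (subset_cjoin_right hAi_ne)
      · intro e he heJ
        rcases extreme_cjoin_union le_rfl hAi_C hJ'C he heJ with h | h
        · exact ⟨i, Finset.mem_insert_self i s, h⟩
        · obtain ⟨j, hj, hje⟩ := hJ'ext e he h
          exact ⟨j, Finset.mem_insert_of_mem hj, hje⟩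

/-- **Milman's theorem**: if `C = closure (convexHull ℝ S)` with `S` compact, then the extreme
points of `C` lie in `S`. -/
theorem milman {C S : Set E} (hC : IsCompact C) (hCconv : Convex ℝ C)
    (hS : IsCompact S) (hSC : S ⊆ C) (hCS : C = closure (convexHull ℝ S)) :
    C.extremePoints ℝ ⊆ S := by
  classical
  intro e he
  rw [← hS.isClosed.closure_eq, mem_closure_iff]
  intro O hO heO
  -- `N` is an open neighbourhood of `0` such that `e - y ∈ O` for `y ∈ N`.
  set N : Set E := (fun y => e - y) ⁻¹' O with hN
  have hNopen : IsOpen N := hO.preimage (by fun_prop)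
  have hN0 : (0 : E) ∈ N := by simpa [hN] using heO
  obtain ⟨N₁, hN₁, hN₁half⟩ := exists_nhds_zero_half (hNopen.mem_nhds hN0)
  obtain ⟨V, ⟨hVnhds, hVconv⟩, hVN₁⟩ :=
    ((LocallyConvexSpace.convex_basis (𝕜 := ℝ) (0 : E)).mem_iff).1 hN₁
  set V' := interior V with hV'
  have hV'open : IsOpen V' := isOpen_interior
  have hV'0 : (0 : E) ∈ V' := mem_interior_iff_mem_nhds.2 hVnhds
  have hV'conv : Convex ℝ V' := hVconv.interior
  -- the translated neighbourhoods
  set c : E → Set E := fun x => (fun y => y - x) ⁻¹' V' with hc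
  have hcopen : ∀ x, IsOpen (c x) := fun x => hV'open.preimage (by fun_prop)
  have hcconv : ∀ x, Convex ℝ (c x) := by
    intro x y₁ h₁ y₂ h₂ p q hp hq hpq
    have : p • y₁ + q • y₂ - x = p • (y₁ - x) + q • (y₂ - x) := by
      match_scalars <;> linarith
    simpa [hc, this] using hV'conv h₁ h₂ hp hq hpq
  have hcover : S ⊆ ⋃ x ∈ S, c x := by
    intro y hy
    exact Set.mem_biUnion hy (by simp [hc, hV'0])
  obtain ⟨b', hb'S, hb'fin, hb'cover⟩ :=
    hS.elim_finite_subcover_image (fun x _ => hcopen x) hcover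
  set t : Finset E := hb'fin.toFinset.filter (fun x => (S ∩ c x).Nonempty) with ht
  set A : E → Set E := fun x => closure (convexHull ℝ (S ∩ c x)) with hA
  have hAC : ∀ x, A x ⊆ C := by
    intro x
    rw [hCS]
    exact closure_mono (convexHull_mono Set.inter_subset_left)
  have hAprops : ∀ x ∈ t, IsCompact (A x) ∧ Convex ℝ (A x) ∧ A x ⊆ C ∧ (A x).Nonempty := by
    intro x hx
    rw [ht, Finset.mem_filter] at hx
    obtain ⟨y, hy⟩ := hx.2
    refine ⟨hC.of_isClosed_subset isClosed_closure (hAC x), (convex_convexHull ℝ _).closure,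
      hAC x, ⟨y, subset_closure (subset_convexHull ℝ _ hy)⟩⟩
  obtain ⟨J, hJcomp, hJconv, hJC, hJsub, hJext⟩ := exists_join hCconv t A hAprops
  have hSJ : S ⊆ J := by
    intro y hy
    obtain ⟨x, hx, hyx⟩ := Set.mem_iUnion₂.1 (hb'cover hy)
    have hxt : x ∈ t := by
      rw [ht, Finset.mem_filter, Set.Finite.mem_toFinset]
      exact ⟨hx, ⟨y, hy, hyx⟩⟩
    exact hJsub x hxt (subset_closure (subset_convexHull ℝ _ ⟨hy, hyx⟩))
  have hCJ : C = J := by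
    refine le_antisymm ?_ hJC
    rw [hCS]
    exact closure_minimal (convexHull_min hSJ hJconv) hJcomp.isClosed
  obtain ⟨x, hxt, hex⟩ := hJext e he (hCJ ▸ extremePoints_subset he)
  -- `e` lies in `closure (c x) ⊆ x + V' + N₁`
  have hexc : e ∈ closure (c x) :=
    (closure_mono (convexHull_min Set.inter_subset_right (hcconv x))) hex
  have h1 : e - x ∈ closure V' := by
    have hkey : closure ((fun y => y - x) ⁻¹' V') = (fun y => y - x) ⁻¹' closure V' :=
      ((Homeomorph.subRight x).preimage_closure V').symm
    rw [hc] at hexc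
    rw [hkey] at hexc
    exact hexc
  -- closure V' ⊆ V' + N₁
  have h2 : e - x ∈ N := by
    have ht' : {z | e - x - z ∈ N₁} ∈ nhds (e - x) := by
      apply ContinuousAt.preimage_mem_nhds (f := fun z => e - x - z) (by fun_prop)
      simpa using hN₁
    obtain ⟨v, hv1, hv2⟩ := mem_closure_iff_nhds.1 h1 _ ht'
    have : e - x = v + (e - x - v) := by abel
    rw [this]
    exact hN₁half _ (hVN₁ (interior_subset hv2)) _ hv1
  have hxO : x ∈ O := by simpa [hN, sub_sub_cancel] using h2
  have hxS : x ∈ S := by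
    have : x ∈ hb'fin.toFinset := (Finset.mem_filter.1 (ht ▸ hxt)).1
    exact hb'S (hb'fin.mem_toFinset.1 this)
  exact ⟨x, hxO, hxS⟩

end Milman

section WeakDualStuff
open NormedSpace Metric
variable {V : Type*} [NormedAddCommGroup V] [NormedSpace ℝ V]

noncomputable instance : LocallyConvexSpace ℝ (WeakDual ℝ V) :=
  WeakBilin.locallyConvexSpace

theorem norm_comp_isometry (φ : StrongDual ℝ V) (e : V ≃ₗᵢ[ℝ] V) :
    ‖φ.comp (e.toContinuousLinearEquiv : V →L[ℝ] V)‖ = ‖φ‖ := by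
  apply le_antisymm
  · apply ContinuousLinearMap.opNorm_le_bound _ (norm_nonneg φ)
    intro v
    calc ‖(φ.comp (e.toContinuousLinearEquiv : V →L[ℝ] V)) v‖ = ‖φ (e v)‖ := rfl
      _ ≤ ‖φ‖ * ‖e v‖ := φ.le_opNorm _
      _ = ‖φ‖ * ‖v‖ := by rw [e.norm_map]
  · apply ContinuousLinearMap.opNorm_le_bound _ (norm_nonneg _)
    intro v
    calc ‖φ v‖ = ‖(φ.comp (e.toContinuousLinearEquiv : V →L[ℝ] V)) (e.symm v)‖ := by
          congr 1
          show φ v = φ (e (e.symm v))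
          rw [e.apply_symm_apply]
      _ ≤ ‖φ.comp (e.toContinuousLinearEquiv : V →L[ℝ] V)‖ * ‖e.symm v‖ :=
          ContinuousLinearMap.le_opNorm _ _
      _ = ‖φ.comp (e.toContinuousLinearEquiv : V →L[ℝ] V)‖ * ‖v‖ := by rw [e.symm.norm_map]

/-- The dual action on the weak-star dual. -/
noncomputable def Tact (e : V ≃ₗᵢ[ℝ] V) (x : WeakDual ℝ V) : WeakDual ℝ V :=
  WeakDual.toStrongDual.symm (dualAct e (WeakDual.toStrongDual x))

theorem toNormedDual_Tact (e : V ≃ₗᵢ[ℝ] V) (x : WeakDual ℝ V) :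
    WeakDual.toStrongDual (Tact e x) = dualAct e (WeakDual.toStrongDual x) :=
  WeakDual.toStrongDual.apply_symm_apply _

theorem Tact_apply (e : V ≃ₗᵢ[ℝ] V) (x : WeakDual ℝ V) (v : V) :
    Tact e x v = x (e.symm v) := rfl

theorem Tact_continuous (e : V ≃ₗᵢ[ℝ] V) : Continuous (Tact e) :=
  WeakDual.continuous_of_continuous_eval fun v => WeakDual.eval_continuous (e.symm v)

theorem Tact_add (e : V ≃ₗᵢ[ℝ] V) (x y : WeakDual ℝ V) :
    Tact e (x + y) = Tact e x + Tact e y :=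
  DFunLike.ext _ _ fun v => rfl

theorem Tact_smul (e : V ≃ₗᵢ[ℝ] V) (c : ℝ) (x : WeakDual ℝ V) :
    Tact e (c • x) = c • Tact e x :=
  DFunLike.ext _ _ fun v => rfl

/-- `Tact e` as a linear map. -/
noncomputable def TactL (e : V ≃ₗᵢ[ℝ] V) : WeakDual ℝ V →ₗ[ℝ] WeakDual ℝ V where
  toFun := Tact e
  map_add' := Tact_add e
  map_smul' := Tact_smul e

theorem Tact_one (x : WeakDual ℝ V) : Tact 1 x = x :=
  DFunLike.ext _ _ fun v => rfl

theorem Tact_mul (e f : V ≃ₗᵢ[ℝ] V) (x : WeakDual ℝ V) :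
    Tact (e * f) x = Tact e (Tact f x) :=
  DFunLike.ext _ _ fun v => rfl

theorem Tact_dist (e : V ≃ₗᵢ[ℝ] V) (x y : WeakDual ℝ V) :
    ‖WeakDual.toStrongDual (Tact e x) - WeakDual.toStrongDual (Tact e y)‖
      = ‖WeakDual.toStrongDual x - WeakDual.toStrongDual y‖ := by
  have h : WeakDual.toStrongDual (Tact e x) - WeakDual.toStrongDual (Tact e y)
      = (WeakDual.toStrongDual x - WeakDual.toStrongDual y).comp
        (e.symm.toContinuousLinearEquiv : V →L[ℝ] V) := by
    ext v
    rfl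
  rw [h, norm_comp_isometry]

/-- The Baire-category small-slice lemma. -/
theorem exists_small_slice {X : Set (WeakDual ℝ V)} (hX : IsCompact X) (hXne : X.Nonempty)
    (hsep : TopologicalSpace.IsSeparable (⇑WeakDual.toStrongDual '' X : Set (StrongDual ℝ V)))
    {ε : ℝ} (hε : 0 < ε) :
    ∃ U : Set (WeakDual ℝ V), IsOpen U ∧ (U ∩ X).Nonempty ∧
      ∃ φ : StrongDual ℝ V, U ∩ X ⊆ ⇑WeakDual.toStrongDual ⁻¹' closedBall φ ε := by
  obtain ⟨T, hTc, hTsub⟩ := hsep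
  haveI : CompactSpace ↥X := isCompact_iff_compactSpace.mp hX
  haveI : Nonempty ↥X := hXne.to_subtype
  haveI : Countable ↥T := hTc.to_subtype
  set f : ↥T → Set ↥X := fun φ =>
    Subtype.val ⁻¹' (⇑WeakDual.toStrongDual ⁻¹' closedBall φ.val ε) with hf
  have hfclosed : ∀ φ, IsClosed (f φ) := fun φ =>
    (WeakDual.isClosed_closedBall φ.val ε).preimage continuous_subtype_val
  have hfcover : ⋃ φ, f φ = Set.univ := by
    ext x
    simp only [Set.mem_iUnion, Set.mem_univ, iff_true]
    have hx : WeakDual.toStrongDual x.val ∈ closure T :=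
      hTsub (Set.mem_image_of_mem _ x.2)
    obtain ⟨φ, hφT, hφd⟩ := Metric.mem_closure_iff.1 hx ε hε
    exact ⟨⟨φ, hφT⟩, by simp only [hf, Set.mem_preimage, Metric.mem_closedBall]; exact hφd.le⟩
  obtain ⟨φ, x₀, hx₀⟩ := nonempty_interior_of_iUnion_of_closed hfclosed hfcover
  obtain ⟨U, hUopen, hUeq⟩ := isOpen_induced_iff.1 (isOpen_interior (s := f φ))
  refine ⟨U, hUopen, ⟨x₀.val, ?_, x₀.2⟩, φ.val, ?_⟩
  · have hmem : x₀ ∈ Subtype.val ⁻¹' U := hUeq.symm ▸ hx₀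
    exact hmem
  · intro y hy
    have hyX : (⟨y, hy.2⟩ : ↥X) ∈ Subtype.val ⁻¹' U := hy.1
    rw [hUeq] at hyX
    have h2 : (⟨y, hy.2⟩ : ↥X) ∈ f φ := interior_subset hyX
    exact h2

end WeakDualStuff
end Stmt2Aux
set_option maxHeartbeats 3000000 in
open Stmt2Aux Set Metric in
/-- Let `V` be a Banach space, `K ⊂ V*` nonempty, norm separable,
convex and weak*-compact, and `G` a group acting on `V` by linear isometries
whose dual action preserves `K`.  Then `K` contains a `G`-fixed point. -/
theorem stmt2 {V : Type*} [NormedAddCommGroup V] [NormedSpace ℝ V] [CompleteSpace V]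
    {G : Type*} [Group G] (ρ : G →* (V ≃ₗᵢ[ℝ] V))
    (K : Set (StrongDual ℝ V))
    (hne : K.Nonempty)
    (hsep : TopologicalSpace.IsSeparable K)
    (hconv : Convex ℝ K)
    (hcomp : IsCompact (WeakDual.toStrongDual ⁻¹' K))
    (hinv : ∀ g : G, ∀ φ ∈ K, dualAct (ρ g) φ ∈ K) :
    ∃ x₀ ∈ K, ∀ g : G, dualAct (ρ g) x₀ = x₀ := by
  classical
  set K' : Set (WeakDual ℝ V) := ⇑WeakDual.toStrongDual ⁻¹' K with hK'
  have hK'comp : IsCompact K' := hcomp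
  have hK'conv : Convex ℝ K' := by
    intro x hx y hy p q hp hq hpq
    show WeakDual.toStrongDual (p • x + q • y) ∈ K
    rw [map_add, map_smul, map_smul]
    exact hconv hx hy hp hq hpq
  have hK'ne : K'.Nonempty := by
    obtain ⟨φ, hφ⟩ := hne
    refine ⟨WeakDual.toStrongDual.symm φ, ?_⟩
    show WeakDual.toStrongDual (WeakDual.toStrongDual.symm φ) ∈ K
    rwa [LinearEquiv.apply_symm_apply]
  have hK'inv : ∀ g : G, ∀ x ∈ K', Tact (ρ g) x ∈ K' := by
    intro g x hx
    show WeakDual.toStrongDual (Tact (ρ g) x) ∈ K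
    rw [toNormedDual_Tact]
    exact hinv g _ hx
  -- norm bound on `K'` via Banach–Steinhaus
  obtain ⟨R, hR0, hRb⟩ : ∃ R : ℝ, 0 ≤ R ∧ ∀ x ∈ K', ‖WeakDual.toStrongDual x‖ ≤ R := by
    have hpt : ∀ v : V, ∃ Cv, ∀ x : ↥K', ‖(WeakDual.toStrongDual x.val) v‖ ≤ Cv := by
      intro v
      have hcomp' : IsCompact ((fun x : WeakDual ℝ V => x v) '' K') :=
        hK'comp.image (WeakDual.eval_continuous v)
      obtain ⟨Cv, hCv⟩ := hcomp'.isBounded.exists_norm_le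
      exact ⟨Cv, fun x => hCv _ (mem_image_of_mem _ x.2)⟩
    obtain ⟨R, hR⟩ := banach_steinhaus (g := fun x : ↥K' => WeakDual.toStrongDual x.val) hpt
    exact ⟨max R 0, le_max_right _ _, fun x hx => le_trans (hR ⟨x, hx⟩) (le_max_left _ _)⟩
  have hdistb : ∀ x ∈ K', ∀ y ∈ K',
      ‖WeakDual.toStrongDual x - WeakDual.toStrongDual y‖ ≤ 2 * R := by
    intro x hx y hy
    calc ‖WeakDual.toStrongDual x - WeakDual.toStrongDual y‖
        ≤ ‖WeakDual.toStrongDual x‖ + ‖WeakDual.toStrongDual y‖ := norm_sub_le _ _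
      _ ≤ 2 * R := by linarith [hRb x hx, hRb y hy]
  -- Zorn's lemma: a minimal invariant nonempty compact convex subset
  set S : Set (Set (WeakDual ℝ V)) := {C | C ⊆ K' ∧ C.Nonempty ∧ IsCompact C ∧ Convex ℝ C ∧
    ∀ g : G, ∀ x ∈ C, Tact (ρ g) x ∈ C} with hS
  have hK'S : K' ∈ S := ⟨subset_rfl, hK'ne, hK'comp, hK'conv, hK'inv⟩
  have hchain : ∀ c ⊆ S, IsChain (· ⊆ ·) c → c.Nonempty → ∃ lb ∈ S, ∀ s ∈ c, lb ⊆ s := by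
    intro c hcS hchain hcne
    obtain ⟨t₀, ht₀⟩ := hcne
    refine ⟨⋂₀ c, ⟨?_, ?_, ?_, ?_, ?_⟩, fun s hs => sInter_subset_of_mem hs⟩
    · exact (sInter_subset_of_mem ht₀).trans (hcS ht₀).1
    · haveI : Nonempty ↥c := ⟨⟨t₀, ht₀⟩⟩
      rw [sInter_eq_iInter]
      apply IsCompact.nonempty_iInter_of_directed_nonempty_isCompact_isClosed
      · intro t u
        rcases hchain.total t.2 u.2 with h | h
        exacts [⟨t, subset_rfl, h⟩, ⟨u, h, subset_rfl⟩]
      · exact fun t => (hcS t.2).2.1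
      · exact fun t => (hcS t.2).2.2.1
      · exact fun t => (hcS t.2).2.2.1.isClosed
    · exact (hcS ht₀).2.2.1.of_isClosed_subset
        (isClosed_sInter fun t ht => (hcS ht).2.2.1.isClosed) (sInter_subset_of_mem ht₀)
    · exact convex_sInter fun t ht => (hcS ht).2.2.2.1
    · intro g x hx
      rw [mem_sInter] at hx ⊢
      exact fun t ht => (hcS ht).2.2.2.2 g x (hx t ht)
  obtain ⟨C, hCK'sub, hCmin⟩ := zorn_superset_nonempty S hchain K' hK'S
  obtain ⟨hCsubK', hCne, hCcomp, hCconv, hCinv⟩ := hCmin.1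
  -- The key claim: the minimal set is a singleton
  have key : ∀ y₁ ∈ C, ∀ y₂ ∈ C, y₁ = y₂ := by
    by_contra hcon
    push_neg at hcon
    obtain ⟨y₁, hy₁, y₂, hy₂, hne12⟩ := hcon
    set δ := ‖WeakDual.toStrongDual y₁ - WeakDual.toStrongDual y₂‖ with hδdef
    have hδ : 0 < δ := by
      rw [hδdef, norm_pos_iff, sub_ne_zero]
      exact fun h => hne12 (WeakDual.toStrongDual.injective h)
    set m := (1/2 : ℝ) • y₁ + (1/2 : ℝ) • y₂ with hm
    have hmC : m ∈ C := hCconv hy₁ hy₂ (by norm_num) (by norm_num) (by norm_num)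
    have hsub12 : ∀ y : WeakDual ℝ V,
        WeakDual.toStrongDual y - WeakDual.toStrongDual m
          = WeakDual.toStrongDual y
            - ((1/2:ℝ) • WeakDual.toStrongDual y₁ + (1/2:ℝ) • WeakDual.toStrongDual y₂) := by
      intro y
      rw [hm, map_add, map_smul, map_smul]
    have hd1 : ‖WeakDual.toStrongDual y₁ - WeakDual.toStrongDual m‖ = δ / 2 := by
      rw [hsub12]
      have heq : WeakDual.toStrongDual y₁
          - ((1/2:ℝ) • WeakDual.toStrongDual y₁ + (1/2:ℝ) • WeakDual.toStrongDual y₂)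
          = (1/2:ℝ) • (WeakDual.toStrongDual y₁ - WeakDual.toStrongDual y₂) := by module
      rw [heq, norm_smul, hδdef]
      simp
      ring
    have hd2 : ‖WeakDual.toStrongDual y₂ - WeakDual.toStrongDual m‖ = δ / 2 := by
      rw [hsub12]
      have heq : WeakDual.toStrongDual y₂
          - ((1/2:ℝ) • WeakDual.toStrongDual y₁ + (1/2:ℝ) • WeakDual.toStrongDual y₂)
          = (-(1/2):ℝ) • (WeakDual.toStrongDual y₁ - WeakDual.toStrongDual y₂) := by module
      rw [heq, norm_smul, hδdef]
      simp
      ring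
    -- the closure of the set of extreme points
    set X := closure (extremePoints ℝ C) with hX
    have hextne : (extremePoints ℝ C).Nonempty := hCcomp.extremePoints_nonempty hCne
    have hXC : X ⊆ C := closure_minimal extremePoints_subset hCcomp.isClosed
    have hXcomp : IsCompact X := hCcomp.of_isClosed_subset isClosed_closure hXC
    have hXne : X.Nonempty := hextne.mono subset_closure
    have hKM : closure (convexHull ℝ (extremePoints ℝ C)) = C :=
      closure_convexHull_extremePoints hCcomp hCconv
    have hCX : C = closure (convexHull ℝ X) := by
      apply le_antisymm
      · conv_lhs => rw [← hKM]
        exact closure_mono (convexHull_mono subset_closure)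
      · exact closure_minimal (convexHull_min hXC hCconv) hCcomp.isClosed
    -- Baire category: a small slice
    have hXsep : TopologicalSpace.IsSeparable (⇑WeakDual.toStrongDual '' X) := by
      apply hsep.mono
      rintro _ ⟨x, hx, rfl⟩
      exact hCsubK' (hXC hx)
    have hεpos : (0:ℝ) < δ/16 := by linarith
    obtain ⟨U, hUopen, hUXne, φ, hUX⟩ := exists_small_slice hXcomp hXne hXsep hεpos
    set D := ⇑WeakDual.toStrongDual ⁻¹' closedBall φ (δ/16) with hD
    have hDclosed : IsClosed D := WeakDual.isClosed_closedBall φ _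
    have hDconv : Convex ℝ D := by
      intro x hx y hy p q hp hq hpq
      show WeakDual.toStrongDual (p • x + q • y) ∈ closedBall φ (δ/16)
      rw [map_add, map_smul, map_smul]
      exact convex_closedBall φ _ hx hy hp hq hpq
    have hDdiam : ∀ x ∈ D, ∀ y ∈ D,
        ‖WeakDual.toStrongDual x - WeakDual.toStrongDual y‖ ≤ 2 * (δ/16) := by
      intro x hx y hy
      rw [← dist_eq_norm]
      calc dist (WeakDual.toStrongDual x) (WeakDual.toStrongDual y)
          ≤ dist (WeakDual.toStrongDual x) φ + dist φ (WeakDual.toStrongDual y) :=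
            dist_triangle _ _ _
        _ ≤ δ/16 + δ/16 := by
            refine add_le_add hx ?_
            rw [dist_comm]
            exact hy
        _ = 2 * (δ/16) := by ring
    by_cases hXU : X ⊆ U
    · -- easy case: all of C has small diameter, contradiction
      have hXD : X ⊆ D := fun x hx => hUX ⟨hXU hx, hx⟩
      have hCD : C ⊆ D := by
        rw [hCX]
        exact closure_minimal (convexHull_min hXD hDconv) hDclosed
      have := hDdiam y₁ (hCD hy₁) y₂ (hCD hy₂)
      rw [← hδdef] at this
      linarith
    · -- main case
      have hS₁ne : (X \ U).Nonempty := by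
        obtain ⟨a, haX, haU⟩ := not_subset.1 hXU
        exact ⟨a, haX, haU⟩
      set K₁ := closure (convexHull ℝ (X \ U)) with hK₁
      set K₂ := closure (convexHull ℝ (X ∩ U)) with hK₂
      have hK₁C : K₁ ⊆ C :=
        closure_minimal (convexHull_min (diff_subset.trans hXC) hCconv) hCcomp.isClosed
      have hK₂C : K₂ ⊆ C :=
        closure_minimal (convexHull_min (inter_subset_left.trans hXC) hCconv) hCcomp.isClosed
      have hK₁comp : IsCompact K₁ := hCcomp.of_isClosed_subset isClosed_closure hK₁C
      have hK₂comp : IsCompact K₂ := hCcomp.of_isClosed_subset isClosed_closure hK₂C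
      have hK₁conv : Convex ℝ K₁ := (convex_convexHull ℝ _).closure
      have hK₂conv : Convex ℝ K₂ := (convex_convexHull ℝ _).closure
      have hK₁ne : K₁.Nonempty :=
        hS₁ne.mono ((subset_convexHull ℝ _).trans subset_closure)
      have hK₂ne : K₂.Nonempty := by
        obtain ⟨u, huU, huX⟩ := hUXne
        exact ⟨u, subset_closure (subset_convexHull ℝ _ ⟨huX, huU⟩)⟩
      have hK₂D : K₂ ⊆ D :=
        closure_minimal (convexHull_min (fun x hx => hUX ⟨hx.2, hx.1⟩) hDconv) hDclosed
      set r := min (1/2 : ℝ) (δ / (16 * (R+1))) with hr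
      have hrpos : 0 < r := lt_min (by norm_num) (div_pos hδ (by linarith))
      have hr1 : r ≤ 1 := le_trans (min_le_left _ _) (by norm_num)
      have hrR : r * (2*R) ≤ δ/8 := by
        have h1 : r ≤ δ/(16*(R+1)) := min_le_right _ _
        have h2 : r * (2*R) ≤ (δ/(16*(R+1))) * (2*(R+1)) := by
          apply mul_le_mul h1 (by linarith) (by linarith) (by positivity)
        have h3 : (δ/(16*(R+1))) * (2*(R+1)) = δ/8 := by
          field_simp
          ring
        linarith
      set C₁ := cjoin r K₁ K₂ with hC₁
      have hC₁C : C₁ ⊆ C := cjoin_subset hrpos.le hK₁C hK₂C hCconv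
      have hC₁conv : Convex ℝ C₁ := cjoin_convex hrpos.le hK₁conv hK₂conv hK₁ne hK₂ne
      have hC₁comp : IsCompact C₁ := cjoin_isCompact hK₁comp hK₂comp
      have hXjoin : X ⊆ cjoin 0 K₁ K₂ := by
        intro x hx
        by_cases hxU : x ∈ U
        · exact subset_cjoin_right hK₁ne (subset_closure (subset_convexHull ℝ _ ⟨hx, hxU⟩))
        · exact subset_cjoin_left zero_le_one hK₂ne
            (subset_closure (subset_convexHull ℝ _ ⟨hx, hxU⟩))
      have hCjoin : C ⊆ cjoin 0 K₁ K₂ := by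
        rw [hCX]
        exact closure_minimal
          (convexHull_min hXjoin (cjoin_convex le_rfl hK₁conv hK₂conv hK₁ne hK₂ne))
          (cjoin_isCompact hK₁comp hK₂comp).isClosed
      -- properness of `C₁`
      have hC₁ne_eq : C₁ ≠ C := by
        intro hEq
        have hextK₁ : extremePoints ℝ C ⊆ K₁ := by
          intro e he
          exact extreme_cjoin_pos hrpos hK₁C hK₂C he
            (show e ∈ C₁ from hEq ▸ extremePoints_subset he)
        have hCK₁ : C ⊆ K₁ := by
          rw [← hKM]
          exact closure_minimal (convexHull_min hextK₁ hK₁conv) hK₁comp.isClosed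
        have hS₁comp : IsCompact (X \ U) :=
          hXcomp.of_isClosed_subset (isClosed_closure.sdiff hUopen) diff_subset
        have hmil : extremePoints ℝ C ⊆ X \ U :=
          milman hCcomp hCconv hS₁comp (diff_subset.trans hXC) (le_antisymm hCK₁ hK₁C)
        obtain ⟨u, huU, huX⟩ := hUXne
        have huX' : u ∈ closure (extremePoints ℝ C) := huX
        obtain ⟨e, heU, heExt⟩ := mem_closure_iff.1 huX' U hUopen huU
        exact (hmil heExt).2 heU
      -- minimality: the closed convex hull of the orbit of `m` is `C`
      set O := Set.range (fun g : G => Tact (ρ g) m) with hO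
      have hOC : O ⊆ C := by
        rintro _ ⟨g, rfl⟩
        exact hCinv g m hmC
      set clO := closure (convexHull ℝ O) with hclO
      have hclOC : clO ⊆ C := closure_minimal (convexHull_min hOC hCconv) hCcomp.isClosed
      have hclOS : clO ∈ S := by
        refine ⟨hclOC.trans hCsubK',
          ⟨m, subset_closure (subset_convexHull ℝ _ ⟨1, show Tact (ρ 1) m = m by rw [map_one, Tact_one]⟩)⟩,
          hCcomp.of_isClosed_subset isClosed_closure hclOC,
          (convex_convexHull ℝ _).closure, ?_⟩
        intro g x hx
        have h2 : Tact (ρ g) '' closure (convexHull ℝ O)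
            ⊆ closure (Tact (ρ g) '' convexHull ℝ O) :=
          image_closure_subset_closure_image (Tact_continuous _)
        have h3 : Tact (ρ g) '' convexHull ℝ O = convexHull ℝ (Tact (ρ g) '' O) :=
          LinearMap.image_convexHull (TactL (ρ g)) O
        have h4 : Tact (ρ g) '' O ⊆ O := by
          rintro _ ⟨_, ⟨h, rfl⟩, rfl⟩
          exact ⟨g * h, show Tact (ρ (g * h)) m = Tact (ρ g) (Tact (ρ h) m) by
            rw [map_mul, Tact_mul]⟩
        have h5 : Tact (ρ g) x ∈ closure (Tact (ρ g) '' convexHull ℝ O) :=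
          h2 (mem_image_of_mem _ hx)
        rw [h3] at h5
        exact closure_mono (convexHull_mono h4) h5
      have hCclO : C = clO := le_antisymm (hCmin.2 hclOS hclOC) hclOC
      -- find a group element moving `m` out of `C₁`
      have hOnotsub : ¬ O ⊆ C₁ := by
        intro hsubO
        apply hC₁ne_eq
        apply le_antisymm hC₁C
        rw [hCclO]
        exact closure_minimal (convexHull_min hsubO hC₁conv) hC₁comp.isClosed
      obtain ⟨w, hwO, hgm⟩ := not_subset.1 hOnotsub
      obtain ⟨g, rfl⟩ := hwO
      have hgm' : Tact (ρ g) m ∉ C₁ := hgm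
      have hgmC : Tact (ρ g) m ∈ C := hCinv g m hmC
      have hy₁' : Tact (ρ g) y₁ ∈ C := hCinv g y₁ hy₁
      have hy₂' : Tact (ρ g) y₂ ∈ C := hCinv g y₂ hy₂
      have hmid : Tact (ρ g) m = (1/2:ℝ) • Tact (ρ g) y₁ + (1/2:ℝ) • Tact (ρ g) y₂ := by
        rw [hm, Tact_add, Tact_smul, Tact_smul]
      have honeout : Tact (ρ g) y₁ ∉ C₁ ∨ Tact (ρ g) y₂ ∉ C₁ := by
        by_contra hb
        push_neg at hb
        exact hgm' (hmid ▸ hC₁conv hb.1 hb.2 (by norm_num) (by norm_num) (by norm_num))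
      -- small diameter of `C \ C₁`
      have hdiam : ∀ x ∈ C, x ∉ C₁ → ∀ y ∈ C, y ∉ C₁ →
          ‖WeakDual.toStrongDual x - WeakDual.toStrongDual y‖ < δ/2 := by
        intro x hx hxn y hy hyn
        obtain ⟨t, ht0, ht1, a, ha, b, hb, hab⟩ := mem_cjoin_iff.1 (hCjoin hx)
        obtain ⟨t', ht0', ht1', a', ha', b', hb', hab'⟩ := mem_cjoin_iff.1 (hCjoin hy)
        have htr : t < r := by
          by_contra hge
          push_neg at hge
          exact hxn (mem_cjoin_iff.2 ⟨t, hge, ht1, a, ha, b, hb, hab⟩)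
        have htr' : t' < r := by
          by_contra hge
          push_neg at hge
          exact hyn (mem_cjoin_iff.2 ⟨t', hge, ht1', a', ha', b', hb', hab'⟩)
        have hxbound : ∀ (s : ℝ) (p q z : WeakDual ℝ V), 0 ≤ s → s < r → p ∈ K₁ → q ∈ K₂ →
            s • p + (1 - s) • q = z →
            ‖WeakDual.toStrongDual z - WeakDual.toStrongDual q‖ ≤ r * (2*R) := by
          intro s p q z hs0 hsr hp hq hzeq
          have heq : WeakDual.toStrongDual z - WeakDual.toStrongDual q
              = s • (WeakDual.toStrongDual p - WeakDual.toStrongDual q) := by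
            rw [← hzeq, map_add, map_smul, map_smul]
            module
          rw [heq, norm_smul]
          have hpq2R : ‖WeakDual.toStrongDual p - WeakDual.toStrongDual q‖ ≤ 2*R :=
            hdistb _ (hCsubK' (hK₁C hp)) _ (hCsubK' (hK₂C hq))
          rw [Real.norm_eq_abs, abs_of_nonneg hs0]
          exact mul_le_mul hsr.le hpq2R (norm_nonneg _) hrpos.le
        have h1 := hxbound t a b x ht0 htr ha hb hab
        have h2 := hxbound t' a' b' y ht0' htr' ha' hb' hab'
        have h3 : ‖WeakDual.toStrongDual b - WeakDual.toStrongDual b'‖ ≤ 2 * (δ/16) :=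
          hDdiam b (hK₂D hb) b' (hK₂D hb')
        have htri : ‖WeakDual.toStrongDual x - WeakDual.toStrongDual y‖
            ≤ ‖WeakDual.toStrongDual x - WeakDual.toStrongDual b‖
              + ‖WeakDual.toStrongDual b - WeakDual.toStrongDual b'‖
              + ‖WeakDual.toStrongDual b' - WeakDual.toStrongDual y‖ := by
          rw [← dist_eq_norm, ← dist_eq_norm, ← dist_eq_norm, ← dist_eq_norm]
          exact dist_triangle4 _ _ _ _
        have h2' : ‖WeakDual.toStrongDual b' - WeakDual.toStrongDual y‖
            = ‖WeakDual.toStrongDual y - WeakDual.toStrongDual b'‖ := norm_sub_rev _ _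
        rw [h2'] at htri
        linarith
      rcases honeout with hcase | hcase
      · have hlt := hdiam _ hy₁' hcase _ hgmC hgm'
        rw [Tact_dist] at hlt
        rw [hd1] at hlt
        linarith
      · have hlt := hdiam _ hy₂' hcase _ hgmC hgm'
        rw [Tact_dist] at hlt
        rw [hd2] at hlt
        linarith
  -- conclude: any point of `C` is a fixed point
  obtain ⟨x₀, hx₀⟩ := hCne
  refine ⟨WeakDual.toStrongDual x₀, hCsubK' hx₀, fun g => ?_⟩
  have hfix : Tact (ρ g) x₀ = x₀ := key _ (hCinv g x₀ hx₀) _ hx₀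
  calc dualAct (ρ g) (WeakDual.toStrongDual x₀)
      = WeakDual.toStrongDual (Tact (ρ g) x₀) := (toNormedDual_Tact _ _).symm
    _ = WeakDual.toStrongDual x₀ := by rw [hfix]
end

section
/- Let X be a compact Hausdorff G-space and μ a signed regular Borel measure on X with Jordan decomposition μ = μ⁺ − μ⁻. If ‖gμ − μ‖ ≤ ε (total variation) for all g ∈ G, then ‖gμ⁺ − μ⁺‖ ≤ ε and ‖gμ⁻ − μ⁻‖ ≤ ε for all g ∈ G. -/
open MeasureTheory

/-- Total variation norm of a signed measure. -/
noncomputable def tvNorm {X : Type*} [MeasurableSpace X] (s : SignedMeasure X) : ℝ :=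
  (s.totalVariation Set.univ).toReal

section Aux

variable {α : Type*} [MeasurableSpace α]

lemma sm_apply_jordan (s : SignedMeasure α) {A : Set α} (hA : MeasurableSet A) :
    s A = (s.toJordanDecomposition.posPart A).toReal -
      (s.toJordanDecomposition.negPart A).toReal := by
  conv_lhs => rw [← s.toSignedMeasure_toJordanDecomposition]
  rw [MeasureTheory.JordanDecomposition.toSignedMeasure,
    MeasureTheory.Measure.toSignedMeasure_sub_apply hA]
  rfl

lemma totalVariation_finite (s : SignedMeasure α) : IsFiniteMeasure s.totalVariation := by
  unfold MeasureTheory.SignedMeasure.totalVariation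
  infer_instance

lemma posPart_apply_sub_le (ν ρ : SignedMeasure α) {A : Set α} (hA : MeasurableSet A) :
    (ν.toJordanDecomposition.posPart A).toReal -
      (ρ.toJordanDecomposition.posPart A).toReal ≤ ((ν - ρ).totalVariation A).toReal := by
  obtain ⟨i, hi₁, hi₂, hi₃, hpos, hneg⟩ := ν.toJordanDecomposition_spec
  have hν : (ν.toJordanDecomposition.posPart A).toReal = ν (i ∩ A) := by
    rw [hpos, MeasureTheory.SignedMeasure.toMeasureOfZeroLE_apply _ hi₂ hi₁ hA]
    simp
  have hρ : ρ (i ∩ A) ≤ (ρ.toJordanDecomposition.posPart A).toReal := by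
    rw [sm_apply_jordan ρ (hi₁.inter hA)]
    have h1 : (ρ.toJordanDecomposition.posPart (i ∩ A)).toReal ≤
        (ρ.toJordanDecomposition.posPart A).toReal :=
      ENNReal.toReal_mono (measure_ne_top _ _) (measure_mono Set.inter_subset_right)
    have h2 : (0:ℝ) ≤ (ρ.toJordanDecomposition.negPart (i ∩ A)).toReal := ENNReal.toReal_nonneg
    linarith
  have hd : (ν - ρ) (i ∩ A) ≤ ((ν - ρ).totalVariation A).toReal := by
    rw [sm_apply_jordan _ (hi₁.inter hA), MeasureTheory.SignedMeasure.totalVariation,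
      MeasureTheory.Measure.add_apply,
      ENNReal.toReal_add (measure_ne_top _ _) (measure_ne_top _ _)]
    have h1 : ((ν - ρ).toJordanDecomposition.posPart (i ∩ A)).toReal ≤
        ((ν - ρ).toJordanDecomposition.posPart A).toReal :=
      ENNReal.toReal_mono (measure_ne_top _ _) (measure_mono Set.inter_subset_right)
    have h2 : (0:ℝ) ≤ ((ν - ρ).toJordanDecomposition.negPart (i ∩ A)).toReal :=
      ENNReal.toReal_nonneg
    have h3 : (0:ℝ) ≤ ((ν - ρ).toJordanDecomposition.negPart A).toReal := ENNReal.toReal_nonneg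
    linarith
  have hsub : (ν - ρ) (i ∩ A) = ν (i ∩ A) - ρ (i ∩ A) := by
    rw [MeasureTheory.VectorMeasure.sub_apply]
  linarith

lemma tvNorm_le_of_abs_le (s : SignedMeasure α) (τ : Measure α) [IsFiniteMeasure τ]
    (h : ∀ A : Set α, MeasurableSet A → |s A| ≤ (τ A).toReal) :
    tvNorm s ≤ (τ Set.univ).toReal := by
  obtain ⟨i, hi₁, hi₂, hi₃, hpos, hneg⟩ := s.toJordanDecomposition_spec
  have h1 : (s.toJordanDecomposition.posPart Set.univ).toReal = s i := by
    rw [hpos, MeasureTheory.SignedMeasure.toMeasureOfZeroLE_apply _ hi₂ hi₁ MeasurableSet.univ]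
    simp
  have h2 : (s.toJordanDecomposition.negPart Set.univ).toReal = -s iᶜ := by
    rw [hneg,
      MeasureTheory.SignedMeasure.toMeasureOfLEZero_apply _ hi₃ hi₁.compl MeasurableSet.univ]
    simp
  have habs1 := abs_le.mp (h i hi₁)
  have habs2 := abs_le.mp (h iᶜ hi₁.compl)
  have hτ : (τ i).toReal + (τ iᶜ).toReal = (τ Set.univ).toReal := by
    rw [← ENNReal.toReal_add (measure_ne_top _ _) (measure_ne_top _ _),
      ← measure_union disjoint_compl_right hi₁.compl, Set.union_compl_self]
  have htv : tvNorm s = (s.toJordanDecomposition.posPart Set.univ).toReal +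
      (s.toJordanDecomposition.negPart Set.univ).toReal := by
    rw [tvNorm, MeasureTheory.SignedMeasure.totalVariation, MeasureTheory.Measure.add_apply,
      ENNReal.toReal_add (measure_ne_top _ _) (measure_ne_top _ _)]
  rw [htv, h1, h2]
  linarith [habs1.1, habs1.2, habs2.1, habs2.2]

lemma tvNorm_posPart_sub_le (ν ρ : SignedMeasure α) :
    tvNorm (ν.toJordanDecomposition.posPart.toSignedMeasure -
      ρ.toJordanDecomposition.posPart.toSignedMeasure) ≤ tvNorm (ν - ρ) := by
  haveI : IsFiniteMeasure (ν - ρ).totalVariation := totalVariation_finite _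
  refine tvNorm_le_of_abs_le _ _ ?_
  intro A hA
  rw [MeasureTheory.Measure.toSignedMeasure_sub_apply hA, abs_le]
  constructor
  · have := posPart_apply_sub_le ρ ν hA
    have heq : (ρ - ν).totalVariation = (ν - ρ).totalVariation := by
      rw [show ρ - ν = -(ν - ρ) by abel, MeasureTheory.SignedMeasure.totalVariation_neg]
    rw [heq] at this
    simp only [Measure.real]
    linarith
  · exact posPart_apply_sub_le ν ρ hA

lemma tvNorm_negPart_sub_le (ν ρ : SignedMeasure α) :
    tvNorm (ν.toJordanDecomposition.negPart.toSignedMeasure -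
      ρ.toJordanDecomposition.negPart.toSignedMeasure) ≤ tvNorm (ν - ρ) := by
  have hν : ν.toJordanDecomposition.negPart = (-ν).toJordanDecomposition.posPart := by
    rw [MeasureTheory.SignedMeasure.toJordanDecomposition_neg]; rfl
  have hρ : ρ.toJordanDecomposition.negPart = (-ρ).toJordanDecomposition.posPart := by
    rw [MeasureTheory.SignedMeasure.toJordanDecomposition_neg]; rfl
  rw [MeasureTheory.Measure.toSignedMeasure_congr hν,
    MeasureTheory.Measure.toSignedMeasure_congr hρ]
  have := tvNorm_posPart_sub_le (-ν) (-ρ)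
  have heq : tvNorm (-ν - -ρ) = tvNorm (ν - ρ) := by
    rw [show -ν - -ρ = -(ν - ρ) by abel, tvNorm, tvNorm,
      MeasureTheory.SignedMeasure.totalVariation_neg]
  rwa [heq] at this

lemma toSignedMeasure_map {β : Type*} [MeasurableSpace β] (ν : Measure α) [IsFiniteMeasure ν]
    {f : α → β} (hf : Measurable f) :
    ν.toSignedMeasure.map f = (ν.map f).toSignedMeasure := by
  ext A hA
  rw [MeasureTheory.VectorMeasure.map_apply _ hf hA,
    MeasureTheory.Measure.toSignedMeasure_apply_measurable (hf hA),
    MeasureTheory.Measure.toSignedMeasure_apply_measurable hA,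
    Measure.real, Measure.real, MeasureTheory.Measure.map_apply hf hA]

end Aux

/-- Let `X` be a compact Hausdorff `G`-space (a group `G` acting by
homeomorphisms) and `μ` a signed Borel measure with Jordan decomposition
`μ = μ⁺ − μ⁻`.  If `‖gμ − μ‖ ≤ ε` in total variation for all `g ∈ G`, then
`‖gμ⁺ − μ⁺‖ ≤ ε` and `‖gμ⁻ − μ⁻‖ ≤ ε` for all `g ∈ G`. -/
theorem stmt7 {X : Type*} [TopologicalSpace X] [CompactSpace X] [T2Space X]
    [MeasurableSpace X] [BorelSpace X]
    {G : Type*} [Group G] [MulAction G X]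
    (hcont : ∀ g : G, Continuous fun x : X => g • x)
    (μ : SignedMeasure X) (ε : ℝ)
    (hμ : ∀ g : G, tvNorm (μ.map (fun x => g • x) - μ) ≤ ε) :
    ∀ g : G,
      tvNorm ((μ.toJordanDecomposition.posPart.toSignedMeasure).map (fun x => g • x) -
          μ.toJordanDecomposition.posPart.toSignedMeasure) ≤ ε ∧
      tvNorm ((μ.toJordanDecomposition.negPart.toSignedMeasure).map (fun x => g • x) -
          μ.toJordanDecomposition.negPart.toSignedMeasure) ≤ ε := by
  intro g
  set f : X → X := fun x => g • x with hf
  have hfm : Measurable f := (hcont g).measurable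
  have hfm' : Measurable fun x : X => g⁻¹ • x := (hcont g⁻¹).measurable
  -- mutual singularity of the mapped Jordan parts
  obtain ⟨S, hS, hS1, hS2⟩ := μ.toJordanDecomposition.mutuallySingular
  have hpre : f ⁻¹' ((fun x : X => g⁻¹ • x) ⁻¹' S) = S := by
    ext x; simp [hf]
  have hsing : (μ.toJordanDecomposition.posPart.map f) ⟂ₘ
      (μ.toJordanDecomposition.negPart.map f) := by
    refine ⟨(fun x : X => g⁻¹ • x) ⁻¹' S, hfm' hS, ?_, ?_⟩
    · rw [MeasureTheory.Measure.map_apply hfm (hfm' hS), hpre, hS1]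
    · rw [MeasureTheory.Measure.map_apply hfm (hfm' hS).compl, Set.preimage_compl, hpre, hS2]
  set J : MeasureTheory.JordanDecomposition X :=
    ⟨μ.toJordanDecomposition.posPart.map f, μ.toJordanDecomposition.negPart.map f, hsing⟩
    with hJ
  have hmap : μ.map f = J.toSignedMeasure := by
    show μ.map f = (μ.toJordanDecomposition.posPart.map f).toSignedMeasure -
      (μ.toJordanDecomposition.negPart.map f).toSignedMeasure
    conv_lhs => rw [← μ.toSignedMeasure_toJordanDecomposition]
    ext A hA
    rw [MeasureTheory.VectorMeasure.map_apply _ hfm hA,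
      MeasureTheory.VectorMeasure.sub_apply,
      MeasureTheory.Measure.toSignedMeasure_apply_measurable hA,
      MeasureTheory.Measure.toSignedMeasure_apply_measurable hA,
      Measure.real, Measure.real,
      MeasureTheory.Measure.map_apply hfm hA, MeasureTheory.Measure.map_apply hfm hA,
      MeasureTheory.JordanDecomposition.toSignedMeasure,
      MeasureTheory.Measure.toSignedMeasure_sub_apply (hfm hA)]
    rfl
  have hJD : MeasureTheory.SignedMeasure.toJordanDecomposition (μ.map f) = J :=
    MeasureTheory.SignedMeasure.toJordanDecomposition_eq hmap
  have hposmap : (μ.toJordanDecomposition.posPart.toSignedMeasure).map f =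
      (MeasureTheory.SignedMeasure.toJordanDecomposition
        (μ.map f)).posPart.toSignedMeasure := by
    rw [toSignedMeasure_map _ hfm]
    exact MeasureTheory.Measure.toSignedMeasure_congr
      (congrArg MeasureTheory.JordanDecomposition.posPart hJD).symm
  have hnegmap : (μ.toJordanDecomposition.negPart.toSignedMeasure).map f =
      (MeasureTheory.SignedMeasure.toJordanDecomposition
        (μ.map f)).negPart.toSignedMeasure := by
    rw [toSignedMeasure_map _ hfm]
    exact MeasureTheory.Measure.toSignedMeasure_congr
      (congrArg MeasureTheory.JordanDecomposition.negPart hJD).symm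
  constructor
  · rw [hposmap]
    exact le_trans (tvNorm_posPart_sub_le (μ.map f) μ) (hμ g)
  · rw [hnegmap]
    exact le_trans (tvNorm_negPart_sub_le (μ.map f) μ) (hμ g)
end

section
/- Let V be a Banach space, W ⊂ V a convex symmetric bounded subset, B the closed unit ball of V, and for n ≥ 1 let ‖·‖_n be the Minkowski functional of M_n := 2ⁿW + 2⁻ⁿB. Define N(v) = (Σ_{n≥1} ‖v‖_n²)^{1/2} and V_W := {v : N(v) < ∞}. Then W is contained in the N-unit ball: for every w ∈ W, N(w) ≤ 1. -/
open Pointwise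

/-- DFJP construction: Let `V` be a Banach space, `W ⊂ V` a convex
symmetric bounded subset, `B` the closed unit ball, and for `n ≥ 1` let `‖·‖_n`
be the Minkowski functional (gauge) of `M_n = 2ⁿW + 2⁻ⁿB`.  With
`N(v) = (Σ_{n≥1} ‖v‖_n²)^{1/2}`, every `w ∈ W` satisfies `N(w) ≤ 1`.
(We index `M : ℕ → Set V` so that `M n` is the set `M_{n+1}` of the statement.) -/
theorem stmt8 {V : Type*} [NormedAddCommGroup V] [NormedSpace ℝ V] [CompleteSpace V]
    (W : Set V) (hWconv : Convex ℝ W) (hWsymm : -W = W)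
    (hWbdd : Bornology.IsBounded W)
    (M : ℕ → Set V)
    (hM : ∀ n : ℕ,
      M n = (2 ^ (n + 1) : ℝ) • W + ((2 : ℝ) ^ (n + 1))⁻¹ • Metric.closedBall (0 : V) 1) :
    ∀ w ∈ W, Real.sqrt (∑' n : ℕ, gauge (M n) w ^ 2) ≤ 1 := by
  intro w hw
  have key : ∀ n : ℕ, gauge (M n) w ≤ ((2 : ℝ) ^ (n + 1))⁻¹ := by
    intro n
    apply gauge_le_of_mem (by positivity)
    rw [hM n]
    have h1 : (2 ^ (n + 1) : ℝ) • w ∈ (2 ^ (n + 1) : ℝ) • W := Set.smul_mem_smul_set hw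
    have h2 : (0 : V) ∈ ((2 : ℝ) ^ (n + 1))⁻¹ • Metric.closedBall (0 : V) 1 := by
      refine ⟨0, Metric.mem_closedBall_self zero_le_one, smul_zero _⟩
    have hmem := Set.add_mem_add h1 h2
    rw [add_zero] at hmem
    exact ⟨_, hmem, by simp only [smul_smul]; rw [inv_mul_cancel₀ (by positivity : ((2:ℝ)^(n+1)) ≠ 0), one_smul]⟩
  have hg0 : ∀ n : ℕ, 0 ≤ gauge (M n) w := fun n => gauge_nonneg w
  have hsq : ∀ n : ℕ, gauge (M n) w ^ 2 ≤ ((4 : ℝ)⁻¹) ^ (n + 1) := by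
    intro n
    have h := pow_le_pow_left₀ (hg0 n) (key n) 2
    calc gauge (M n) w ^ 2 ≤ (((2 : ℝ) ^ (n + 1))⁻¹) ^ 2 := h
      _ = ((4 : ℝ)⁻¹) ^ (n + 1) := by
        rw [← inv_pow, ← pow_mul, mul_comm, pow_mul]; norm_num
  have hsum : Summable (fun n : ℕ => ((4 : ℝ)⁻¹) ^ (n + 1)) :=
    (summable_geometric_of_lt_one (by norm_num) (by norm_num)).comp_injective
      (add_left_injective 1)
  have hS : Summable (fun n : ℕ => gauge (M n) w ^ 2) :=
    Summable.of_nonneg_of_le (fun n => by positivity) hsq hsum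
  have hle : (∑' n : ℕ, gauge (M n) w ^ 2) ≤ ∑' n : ℕ, ((4 : ℝ)⁻¹) ^ (n + 1) :=
    Summable.tsum_le_tsum hsq hS hsum
  have hval : (∑' n : ℕ, ((4 : ℝ)⁻¹) ^ (n + 1)) = 3⁻¹ := by
    have hg := tsum_geometric_of_lt_one (by norm_num : (0:ℝ) ≤ 4⁻¹) (by norm_num)
    simp only [pow_succ]
    rw [tsum_mul_right, hg]; norm_num
  have : (∑' n : ℕ, gauge (M n) w ^ 2) ≤ 1 := by
    rw [hval] at hle; linarith
  calc Real.sqrt (∑' n : ℕ, gauge (M n) w ^ 2) ≤ Real.sqrt 1 := Real.sqrt_le_sqrt this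
    _ = 1 := Real.sqrt_one
end

section
/- Let W be a Banach space and (‖·‖_n)_{n≥1} a sequence of norms on W each equivalent to the given norm. Let Z = {(w_n) ∈ W^ℕ : Σ‖w_n‖_n² < ∞} with norm |||(w_n)||| = (Σ‖w_n‖_n²)^{1/2}, let Y = {(w,w,w,…) ∈ Z} be the diagonal subspace, and T : Y → W the map T(w,w,…) = w. Then T is linear, injective, continuous, and the image T*(W*) of the adjoint map is dense in Y*. -/
open scoped ENNReal

namespace Stmt10Aux

variable {W : Type*} [NormedAddCommGroup W] [NormedSpace ℝ W]

/-- Type synonym of `W` carrying the `n`-th (definite) seminorm as its norm. -/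
def E (q : ℕ → Seminorm ℝ W) (_hq : ∀ n (w : W), q n w = 0 → w = 0) (n : ℕ) : Type _ := W

section
variable (q : ℕ → Seminorm ℝ W) (hq : ∀ n (w : W), q n w = 0 → w = 0)

instance (n : ℕ) : AddCommGroup (E q hq n) := inferInstanceAs (AddCommGroup W)
instance (n : ℕ) : Module ℝ (E q hq n) := inferInstanceAs (Module ℝ W)

noncomputable instance (n : ℕ) : NormedAddCommGroup (E q hq n) :=
  AddGroupNorm.toNormedAddCommGroup
    { toFun := fun w => q n (show W from w)
      map_zero' := map_zero (q n)
      add_le' := fun a b => map_add_le_add (q n) a b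
      neg' := fun a => map_neg_eq_map (q n) a
      eq_zero_of_map_eq_zero' := fun a h => hq n a h }

noncomputable instance (n : ℕ) : NormedSpace ℝ (E q hq n) where
  norm_smul_le r w := by
    change q n (r • (show W from w)) ≤ ‖r‖ * q n (show W from w)
    rw [map_smul_eq_mul]

def ofW (n : ℕ) : W →ₗ[ℝ] E q hq n where
  toFun w := (show E q hq n from w)
  map_add' _ _ := rfl
  map_smul' _ _ := rfl

@[simp] lemma norm_ofW (n : ℕ) (w : W) : ‖ofW q hq n w‖ = q n w := rfl

end

@[simp] lemma rp2 (x : ℝ) : x ^ (2 : ℝ≥0∞).toReal = x ^ 2 := by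
  rw [ENNReal.toReal_ofNat, show ((2:ℝ)) = ((2:ℕ):ℝ) by norm_num, Real.rpow_natCast]

lemma exists_near_max {V : Type*} [SeminormedAddCommGroup V] [NormedSpace ℝ V]
    (f : V →L[ℝ] ℝ) {η : ℝ} (hη : 0 < η) : ∃ v : V, ‖v‖ ≤ 1 ∧ ‖f‖ - η ≤ f v := by
  by_cases h : ‖f‖ ≤ η
  · exact ⟨0, by simp, by simp; linarith⟩
  push_neg at h
  have h2 : ¬ (‖f‖ ≤ ‖f‖ - η) := by linarith
  rw [ContinuousLinearMap.opNorm_le_iff (by linarith)] at h2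
  push_neg at h2
  obtain ⟨x, hx⟩ := h2
  have hxn : (0:ℝ) < ‖x‖ := by
    rcases (norm_nonneg x).lt_or_eq with h'' | h''
    · exact h''
    · exfalso
      have h1 := f.le_opNorm x
      rw [← h'', mul_zero] at h1 hx
      linarith
  set v := ‖x‖⁻¹ • x with hv
  have hv1 : ‖v‖ ≤ 1 := by
    rw [hv, norm_smul, norm_inv, Real.norm_eq_abs, abs_of_pos hxn, inv_mul_cancel₀ hxn.ne']
  have hfv : ‖f‖ - η < ‖f v‖ := by
    have hfvx : ‖f v‖ = ‖x‖⁻¹ * ‖f x‖ := by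
      rw [hv, map_smul, norm_smul, norm_inv, Real.norm_eq_abs, abs_of_pos hxn]
    rw [hfvx, ← div_eq_inv_mul, lt_div_iff₀ hxn]
    exact hx
  rcases le_total 0 (f v) with h' | h'
  · refine ⟨v, hv1, ?_⟩
    rw [Real.norm_eq_abs, abs_of_nonneg h'] at hfv
    linarith
  · refine ⟨-v, by simpa using hv1, ?_⟩
    rw [Real.norm_eq_abs, abs_of_nonpos h'] at hfv
    rw [map_neg]
    linarith

lemma lp_single_add {α : Type*} [DecidableEq α] {F : α → Type*} [∀ i, NormedAddCommGroup (F i)]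
    (P : ℝ≥0∞) (i : α) (a b : F i) :
    lp.single P i (a + b) = lp.single P i a + lp.single P i b := by
  apply lp.ext
  funext j
  rw [lp.coeFn_add, Pi.add_apply]
  by_cases h : j = i
  · subst h
    rw [lp.single_apply_self, lp.single_apply_self, lp.single_apply_self]
  · rw [lp.single_apply_ne P i _ h, lp.single_apply_ne P i _ h, lp.single_apply_ne P i _ h,
      add_zero]

end Stmt10Aux

set_option maxHeartbeats 1000000 in
/-- Fabian's lemma, used in the DFJP construction: Let `W` be a
Banach space and `(‖·‖_n)` a sequence of norms each equivalent to the given norm.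
Let `Z` be the ℓ²-sum of the spaces `(W, ‖·‖_n)`, `Y ⊂ Z` the diagonal subspace
with the induced norm `|||(w,w,…)||| = (Σ ‖w‖_n²)^{1/2}`, and `T : Y → W`,
`T(w,w,…) = w`.  Then `T` is linear (given), injective and continuous, and the
image `T*(W*)` of the adjoint is dense in `Y*`.  Here `Y` is modelled as an
abstract Banach space together with the linear map `T` whose norm satisfies the
diagonal ℓ²-formula and which maps onto all of the diagonal. -/
theorem stmt10 {W : Type*} [NormedAddCommGroup W] [NormedSpace ℝ W] [CompleteSpace W]
    (p : ℕ → Seminorm ℝ W)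
    (hequiv : ∀ n : ℕ, ∃ c C : ℝ, 0 < c ∧ 0 < C ∧
      ∀ w : W, c * ‖w‖ ≤ p n w ∧ p n w ≤ C * ‖w‖)
    {Y : Type*} [NormedAddCommGroup Y] [NormedSpace ℝ Y] [CompleteSpace Y]
    (T : Y →ₗ[ℝ] W)
    (hTnorm : ∀ y : Y, Summable (fun n => (p n (T y)) ^ 2) ∧
      ‖y‖ = Real.sqrt (∑' n : ℕ, (p n (T y)) ^ 2))
    (hTdiag : ∀ w : W, Summable (fun n => (p n w) ^ 2) → ∃ y : Y, T y = w) :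
    Function.Injective T ∧ Continuous T ∧
      ∀ (ψ : Y →L[ℝ] ℝ) (ε : ℝ), 0 < ε → ∃ φ : W →L[ℝ] ℝ,
        ∀ y : Y, ‖y‖ ≤ 1 → |ψ y - φ (T y)| ≤ ε := by
  classical
  have hq : ∀ n (w : W), p n w = 0 → w = 0 := by
    intro n w h
    obtain ⟨c, C, hc, hC, hw⟩ := hequiv n
    have h1 := (hw w).1
    have h2 : ‖w‖ ≤ 0 := by nlinarith [norm_nonneg w]
    exact norm_eq_zero.mp (le_antisymm h2 (norm_nonneg w))
  have hinj : Function.Injective T := by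
    intro y y' h
    have h0 : T (y - y') = 0 := by rw [map_sub, h, sub_self]
    have hn := (hTnorm (y - y')).2
    rw [h0] at hn
    simp only [map_zero, ne_eq, OfNat.ofNat_ne_zero, not_false_eq_true, zero_pow, tsum_zero,
      Real.sqrt_zero] at hn
    exact sub_eq_zero.mp (norm_eq_zero.mp hn)
  obtain ⟨c0, C0, hc0, hC0, hw0⟩ := hequiv 0
  have hTle : ∀ y, ‖T y‖ ≤ c0⁻¹ * ‖y‖ := by
    intro y
    obtain ⟨hs, hn⟩ := hTnorm y
    have h1 : (p 0 (T y)) ^ 2 ≤ ∑' n, (p n (T y)) ^ 2 :=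
      Summable.le_tsum hs 0 (fun j _ => sq_nonneg _)
    have h2 : p 0 (T y) ≤ ‖y‖ := by
      rw [hn, ← Real.sqrt_sq (apply_nonneg (p 0) (T y))]
      exact Real.sqrt_le_sqrt h1
    have h3 := (hw0 (T y)).1
    rw [inv_mul_eq_div, le_div_iff₀ hc0]
    nlinarith
  have hcont : Continuous T := AddMonoidHomClass.continuous_of_bound T c0⁻¹ hTle
  refine ⟨hinj, hcont, ?_⟩
  intro ψ ε hε
  choose cc CC hcc hCC hb using hequiv
  -- the ℓ²-sum space and the diagonal embedding
  have hmem : ∀ y : Y, Memℓp (fun n => Stmt10Aux.ofW p hq n (T y)) 2 := by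
    intro y
    apply memℓp_gen
    simpa using (hTnorm y).1
  let Jf : Y → lp (Stmt10Aux.E p hq) 2 := fun y =>
    ⟨fun n => Stmt10Aux.ofW p hq n (T y), hmem y⟩
  let J : Y →ₗ[ℝ] lp (Stmt10Aux.E p hq) 2 :=
    { toFun := Jf
      map_add' := fun y z => lp.ext (funext fun n =>
        show Stmt10Aux.ofW p hq n (T (y + z))
            = Stmt10Aux.ofW p hq n (T y) + Stmt10Aux.ofW p hq n (T z) by
          rw [map_add, map_add])
      map_smul' := fun r y => lp.ext (funext fun n =>
        show Stmt10Aux.ofW p hq n (T (r • y)) = r • Stmt10Aux.ofW p hq n (T y) by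
          rw [map_smul, map_smul]) }
  have hJc : ∀ (y : Y) (n : ℕ), (J y : ∀ n, Stmt10Aux.E p hq n) n
      = Stmt10Aux.ofW p hq n (T y) := fun _ _ => rfl
  have h2pos : (0:ℝ) < (2 : ℝ≥0∞).toReal := by norm_num
  have hJnorm : ∀ y, ‖J y‖ = ‖y‖ := by
    intro y
    rw [lp.norm_eq_tsum_rpow h2pos, (hTnorm y).2, Real.sqrt_eq_rpow]
    have hco : ∀ n : ℕ, ‖(J y : ∀ n, Stmt10Aux.E p hq n) n‖ ^ (2 : ℝ≥0∞).toReal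
        = (p n (T y)) ^ 2 := by
      intro n
      rw [hJc, Stmt10Aux.norm_ofW, Stmt10Aux.rp2]
    rw [tsum_congr hco]
    norm_num
  let Jiso : Y →ₗᵢ[ℝ] lp (Stmt10Aux.E p hq) 2 := ⟨J, hJnorm⟩
  obtain ⟨g, hg, -⟩ := exists_extension_norm_eq (LinearMap.range Jiso.toLinearMap)
      (ψ.comp Jiso.equivRange.symm.toLinearIsometry.toContinuousLinearMap)
  have hgJ : ∀ y, g (J y) = ψ y := by
    intro y
    have hmemy : J y ∈ LinearMap.range Jiso.toLinearMap := ⟨y, rfl⟩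
    have h1 := hg ⟨J y, hmemy⟩
    have h3 : Jiso.equivRange y = ⟨J y, hmemy⟩ := Subtype.ext rfl
    have h2 : Jiso.equivRange.symm ⟨J y, hmemy⟩ = y := by
      rw [← h3, LinearIsometryEquiv.symm_apply_apply]
    simpa [h2] using h1
  -- coordinate functionals
  let G : (n : ℕ) → Stmt10Aux.E p hq n →L[ℝ] ℝ := fun n =>
    LinearMap.mkContinuous
      { toFun := fun v => g (lp.single 2 n v)
        map_add' := fun v v' => by
          show g (lp.single 2 n (v + v')) = g (lp.single 2 n v) + g (lp.single 2 n v')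
          rw [Stmt10Aux.lp_single_add, map_add]
        map_smul' := fun r v => by
          show g (lp.single 2 n (r • v)) = r • g (lp.single 2 n v)
          rw [lp.single_smul, map_smul] }
      ‖g‖ (fun v => by
        have hv : ‖lp.single 2 n v‖ = ‖v‖ := by
          have h := lp.norm_single (E := Stmt10Aux.E p hq) (p := 2) (by norm_num)
            n v
          exact h
        calc ‖g (lp.single 2 n v)‖ ≤ ‖g‖ * ‖lp.single 2 n v‖ := g.le_opNorm _
          _ = ‖g‖ * ‖v‖ := by rw [hv])
  have hGapp : ∀ (n : ℕ) (v : Stmt10Aux.E p hq n), G n v = g (lp.single 2 n v) :=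
    fun _ _ => rfl
  -- the ℓ² bound on the coordinate functionals
  have hGa : ∀ s : Finset ℕ, ∑ n ∈ s, ‖G n‖ ^ 2 ≤ ‖g‖ ^ 2 := by
    intro s
    have key : ∀ η, 0 < η → ∑ n ∈ s, ‖G n‖ ^ 2
        ≤ ‖g‖ * Real.sqrt (∑ n ∈ s, ‖G n‖ ^ 2) + η * ∑ n ∈ s, ‖G n‖ := by
      intro η hη
      choose w hw1 hw2 using fun n => Stmt10Aux.exists_near_max (G n) hη
      have hznorm : ‖∑ n ∈ s, lp.single 2 n (‖G n‖ • w n)‖ ^ 2 ≤ ∑ n ∈ s, ‖G n‖ ^ 2 := by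
        have h := lp.norm_sum_single (E := Stmt10Aux.E p hq) (p := 2) h2pos
          (fun n => ‖G n‖ • w n) s
        simp only [Stmt10Aux.rp2] at h
        rw [h]
        apply Finset.sum_le_sum
        intro n _
        rw [norm_smul, Real.norm_eq_abs, abs_of_nonneg (norm_nonneg (G n))]
        have hb2 : ‖w n‖ ^ 2 ≤ 1 := by nlinarith [norm_nonneg (w n), hw1 n]
        calc (‖G n‖ * ‖w n‖) ^ 2 = ‖G n‖ ^ 2 * ‖w n‖ ^ 2 := by ring
          _ ≤ ‖G n‖ ^ 2 * 1 := mul_le_mul_of_nonneg_left hb2 (sq_nonneg _)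
          _ = ‖G n‖ ^ 2 := mul_one _
      have hzle : ‖∑ n ∈ s, lp.single 2 n (‖G n‖ • w n)‖
          ≤ Real.sqrt (∑ n ∈ s, ‖G n‖ ^ 2) := by
        rw [← Real.sqrt_sq (norm_nonneg _)]
        exact Real.sqrt_le_sqrt hznorm
      have hgz : ∑ n ∈ s, (‖G n‖ * G n (w n)) = g (∑ n ∈ s, lp.single 2 n (‖G n‖ • w n)) := by
        rw [map_sum]
        apply Finset.sum_congr rfl
        intro n _
        rw [lp.single_smul, map_smul, smul_eq_mul, hGapp]
      have hlow : ∑ n ∈ s, ‖G n‖ ^ 2 - η * ∑ n ∈ s, ‖G n‖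
          ≤ ∑ n ∈ s, (‖G n‖ * G n (w n)) := by
        rw [Finset.mul_sum, ← Finset.sum_sub_distrib]
        apply Finset.sum_le_sum
        intro n _
        have := mul_le_mul_of_nonneg_left (hw2 n) (norm_nonneg (G n))
        nlinarith
      have hup : ∑ n ∈ s, (‖G n‖ * G n (w n))
          ≤ ‖g‖ * Real.sqrt (∑ n ∈ s, ‖G n‖ ^ 2) := by
        calc ∑ n ∈ s, (‖G n‖ * G n (w n))
            = g (∑ n ∈ s, lp.single 2 n (‖G n‖ • w n)) := hgz
          _ ≤ ‖g (∑ n ∈ s, lp.single 2 n (‖G n‖ • w n))‖ := le_abs_self _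
          _ ≤ ‖g‖ * ‖∑ n ∈ s, lp.single 2 n (‖G n‖ • w n)‖ := g.le_opNorm _
          _ ≤ ‖g‖ * Real.sqrt (∑ n ∈ s, ‖G n‖ ^ 2) :=
              mul_le_mul_of_nonneg_left hzle (norm_nonneg g)
      linarith
    have h2 : ∑ n ∈ s, ‖G n‖ ^ 2 ≤ ‖g‖ * Real.sqrt (∑ n ∈ s, ‖G n‖ ^ 2) := by
      by_contra hcon
      push_neg at hcon
      set A := ∑ n ∈ s, ‖G n‖ with hA
      have hA0 : 0 ≤ A := Finset.sum_nonneg fun n _ => norm_nonneg _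
      set D := ∑ n ∈ s, ‖G n‖ ^ 2 - ‖g‖ * Real.sqrt (∑ n ∈ s, ‖G n‖ ^ 2) with hD
      have hD0 : 0 < D := by rw [hD]; linarith
      have hk := key (D / (A + 1)) (by positivity)
      have hlt : D / (A + 1) * A < D := by
        rw [div_mul_eq_mul_div, div_lt_iff₀ (by linarith)]
        nlinarith
      linarith
    have hS0 : 0 ≤ ∑ n ∈ s, ‖G n‖ ^ 2 := Finset.sum_nonneg fun n _ => sq_nonneg _
    nlinarith [Real.sq_sqrt hS0, Real.sqrt_nonneg (∑ n ∈ s, ‖G n‖ ^ 2), norm_nonneg g,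
      sq_nonneg (Real.sqrt (∑ n ∈ s, ‖G n‖ ^ 2) - ‖g‖)]
  have hGsummable : Summable fun n => ‖G n‖ ^ 2 :=
    summable_of_sum_le (fun n => sq_nonneg _) hGa
  -- expansion of g along coordinates
  have hexp : ∀ z : lp (Stmt10Aux.E p hq) 2, HasSum (fun n => G n (z n)) (g z) := by
    intro z
    have h1 := lp.hasSum_single (E := Stmt10Aux.E p hq) (p := 2) ENNReal.ofNat_ne_top z
    exact h1.mapL g
  -- choice of the cutoff
  obtain ⟨N, hN⟩ : ∃ N, (∑' k, ‖G (k + N)‖ ^ 2) < ε ^ 2 := by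
    have h1 := tendsto_sum_nat_add (fun n => ‖G n‖ ^ 2)
    exact (h1.eventually_lt_const (by positivity)).exists
  -- the approximating functional
  let ι : (n : ℕ) → W →L[ℝ] Stmt10Aux.E p hq n := fun n =>
    LinearMap.mkContinuous (Stmt10Aux.ofW p hq n) (CC n) (fun w => by
      rw [Stmt10Aux.norm_ofW]; exact (hb n w).2)
  refine ⟨∑ n ∈ Finset.range N, (G n).comp (ι n), ?_⟩
  intro y hy
  have hψ : ψ y = ∑' n, G n (Stmt10Aux.ofW p hq n (T y)) := by
    rw [← hgJ y]
    exact ((hexp (J y)).tsum_eq).symm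
  have hφ : (∑ n ∈ Finset.range N, (G n).comp (ι n)) (T y)
      = ∑ n ∈ Finset.range N, G n (Stmt10Aux.ofW p hq n (T y)) := by
    rw [ContinuousLinearMap.sum_apply]
    rfl
  have hsumf : Summable fun n => G n (Stmt10Aux.ofW p hq n (T y)) := (hexp (J y)).summable
  have hsplit := Summable.sum_add_tsum_nat_add (f := fun n => G n (Stmt10Aux.ofW p hq n (T y))) N hsumf
  rw [hψ, hφ, ← hsplit, add_sub_cancel_left]
  -- tail estimates
  have hsz : Summable fun n => (p n (T y)) ^ 2 := (hTnorm y).1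
  have hy2 : ∑' n, (p n (T y)) ^ 2 ≤ 1 := by
    have h := (hTnorm y).2
    have hnn : 0 ≤ ∑' n, (p n (T y)) ^ 2 := tsum_nonneg fun n => sq_nonneg _
    rw [h] at hy
    nlinarith [Real.sq_sqrt hnn, Real.sqrt_nonneg (∑' n, (p n (T y)) ^ 2)]
  have hszt : Summable fun k => (p (k + N) (T y)) ^ 2 := (summable_nat_add_iff N).2 hsz
  have hGt : Summable fun k => ‖G (k + N)‖ ^ 2 := (summable_nat_add_iff N).2 hGsummable
  have htailz : ∑' k, (p (k + N) (T y)) ^ 2 ≤ 1 := by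
    have h := Summable.sum_add_tsum_nat_add (f := fun n => (p n (T y)) ^ 2) N hsz
    have hhead : 0 ≤ ∑ i ∈ Finset.range N, (p i (T y)) ^ 2 :=
      Finset.sum_nonneg fun i _ => sq_nonneg _
    linarith
  have hpt : ∀ k, ‖G (k + N) (Stmt10Aux.ofW p hq (k + N) (T y))‖
      ≤ (1 / (2 * ε)) * ‖G (k + N)‖ ^ 2 + (ε / 2) * (p (k + N) (T y)) ^ 2 := by
    intro k
    have h1 := (G (k + N)).le_opNorm (Stmt10Aux.ofW p hq (k + N) (T y))
    rw [Stmt10Aux.norm_ofW] at h1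
    have h2 : ‖G (k + N)‖ * (p (k + N)) (T y)
        ≤ (1 / (2 * ε)) * ‖G (k + N)‖ ^ 2 + (ε / 2) * (p (k + N) (T y)) ^ 2 := by
      rw [div_mul_eq_mul_div, div_add' _ _ _ (by positivity), le_div_iff₀ (by positivity)]
      nlinarith [sq_nonneg (‖G (k + N)‖ - ε * (p (k + N) (T y)))]
    exact h1.trans h2
  have hmaj : Summable fun k =>
      (1 / (2 * ε)) * ‖G (k + N)‖ ^ 2 + (ε / 2) * (p (k + N) (T y)) ^ 2 :=
    (hGt.mul_left _).add (hszt.mul_left _)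
  have hns : Summable fun k => ‖G (k + N) (Stmt10Aux.ofW p hq (k + N) (T y))‖ :=
    Summable.of_nonneg_of_le (fun k => norm_nonneg _) hpt hmaj
  calc |∑' k, G (k + N) (Stmt10Aux.ofW p hq (k + N) (T y))|
      = ‖∑' k, G (k + N) (Stmt10Aux.ofW p hq (k + N) (T y))‖ := (Real.norm_eq_abs _).symm
    _ ≤ ∑' k, ‖G (k + N) (Stmt10Aux.ofW p hq (k + N) (T y))‖ := norm_tsum_le_tsum_norm hns
    _ ≤ ∑' k, ((1 / (2 * ε)) * ‖G (k + N)‖ ^ 2 + (ε / 2) * (p (k + N) (T y)) ^ 2) :=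
        Summable.tsum_le_tsum hpt hns hmaj
    _ = (1 / (2 * ε)) * ∑' k, ‖G (k + N)‖ ^ 2 + (ε / 2) * ∑' k, (p (k + N) (T y)) ^ 2 := by
        rw [Summable.tsum_add (hGt.mul_left _) (hszt.mul_left _), tsum_mul_left, tsum_mul_left]
    _ ≤ (1 / (2 * ε)) * ε ^ 2 + (ε / 2) * 1 := by
        exact add_le_add (mul_le_mul_of_nonneg_left hN.le (by positivity))
          (mul_le_mul_of_nonneg_left htailz (by positivity))
    _ ≤ ε := by
        have hd : (1 / (2 * ε)) * ε ^ 2 = ε / 2 := by field_simp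
        rw [hd]
        linarith
end

section
/- Let G be the free group on an infinite generating set S, H = ℓ²(G), and for a finite subset S_n ⊂ S of n generators define T_n ∈ B(H) by T_n δ_x = δ_{x₋} if the last letter of the reduced word x lies in S_n^{±1} (where x₋ is x with its last letter erased), and T_n δ_x = 0 otherwise (including x = e). Then for every g ∈ G, the commutator satisfies ‖T_n ∘ λ(g) − λ(g) ∘ T_n‖ ≤ 2, where λ is the left regular representation. -/
open scoped ENNReal

section Aux

open FreeGroup

variable {α : Type*} [DecidableEq α]

theorem freegroup_exists_pair_of_reduce_ne {L : List (α × Bool)} (h : reduce L ≠ L) :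
    ∃ (M1 M2 : List (α × Bool)) (x : α) (b : Bool),
      L = M1 ++ (x, b) :: (x, !b) :: M2 := by
  rcases (Relation.ReflTransGen.cases_head (reduce.red (L := L))) with h1 | ⟨L', hstep, _⟩
  · exact absurd h1.symm h
  · cases hstep with
    | @not M1 M2 x b => exact ⟨M1, M2, x, b, rfl⟩

theorem freegroup_reduce_infix {L M1 M2 : List (α × Bool)} (h : reduce L = L)
    (hM : L = M1 ++ M2) : reduce M1 = M1 ∧ reduce M2 = M2 := by
  constructor
  · by_contra h1
    obtain ⟨K1, K2, x, b, hK⟩ := freegroup_exists_pair_of_reduce_ne h1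
    exact @reduce.not α _ False L K1 (K2 ++ M2) x b (by rw [h, hM, hK]; simp)
  · by_contra h1
    obtain ⟨K1, K2, x, b, hK⟩ := freegroup_exists_pair_of_reduce_ne h1
    exact @reduce.not α _ False L (M1 ++ K1) K2 x b (by rw [h, hM, hK]; simp)

theorem freegroup_reduce_dropLast {M : List (α × Bool)} (h : reduce M = M) :
    reduce M.dropLast = M.dropLast := by
  rw [List.dropLast_eq_take]
  exact (freegroup_reduce_infix h (List.take_append_drop _ M).symm).1

theorem freegroup_key {S : Type*} [DecidableEq S] :
    ∀ (a : List (S × Bool)) (x : FreeGroup S),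
      (∀ k, k ≤ a.length → FreeGroup.mk a * x ≠ FreeGroup.mk (a.take k)) →
      (FreeGroup.mk a * x).toWord.getLast? = x.toWord.getLast? ∧
        FreeGroup.mk ((FreeGroup.mk a * x).toWord.dropLast) =
          FreeGroup.mk a * FreeGroup.mk (x.toWord.dropLast) := by
  intro a
  induction a with
  | nil =>
    intro x _
    constructor
    · rw [show FreeGroup.mk ([] : List (S × Bool)) = 1 from rfl, one_mul]
    · rw [show FreeGroup.mk ([] : List (S × Bool)) = 1 from rfl, one_mul, one_mul]
  | cons s a' ih =>
    intro x h
    have hsplit : FreeGroup.mk (s :: a') = FreeGroup.mk [s] * FreeGroup.mk a' := by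
      rw [FreeGroup.mul_mk]; rfl
    have h' : ∀ k, k ≤ a'.length → FreeGroup.mk a' * x ≠ FreeGroup.mk (a'.take k) := by
      intro k hk heq
      apply h (k + 1) (by simpa using Nat.succ_le_succ hk)
      rw [hsplit, mul_assoc, heq, FreeGroup.mul_mk]
      rfl
    obtain ⟨ih1, ih2⟩ := ih x h'
    set y := FreeGroup.mk a' * x with hy
    have hyne : y ≠ 1 := by
      intro h1
      exact h' 0 (Nat.zero_le _) (by rw [h1]; rfl)
    have hwne : y.toWord ≠ [] := fun h1 => hyne (FreeGroup.toWord_eq_nil_iff.mp h1)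
    obtain ⟨t, u, hw⟩ := List.exists_cons_of_ne_nil hwne
    have hmul : FreeGroup.mk (s :: a') * x = FreeGroup.mk [s] * y := by
      rw [hsplit, mul_assoc]
    have htw : (FreeGroup.mk (s :: a') * x).toWord = reduce (s :: y.toWord) := by
      rw [hmul, ← FreeGroup.mk_toWord (x := y), FreeGroup.mul_mk, FreeGroup.mk_toWord]
      exact FreeGroup.toWord_mk
    rw [FreeGroup.reduce.cons, FreeGroup.reduce_toWord, hw] at htw
    replace htw : (FreeGroup.mk (s :: a') * x).toWord =
        if s.1 = t.1 ∧ s.2 = !t.2 then u else s :: t :: u := htw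
    by_cases hc : s.1 = t.1 ∧ s.2 = !t.2
    · -- cancellation
      rw [if_pos hc] at htw
      have hune : u ≠ [] := by
        intro h1
        apply h 0 (Nat.zero_le _)
        have : (FreeGroup.mk (s :: a') * x).toWord = [] := by rw [htw, h1]
        rw [FreeGroup.toWord_eq_nil_iff.mp this]; rfl
      obtain ⟨t2, u', hu⟩ := List.exists_cons_of_ne_nil hune
      have hts : (FreeGroup.mk [t])⁻¹ = FreeGroup.mk [s] := by
        rw [FreeGroup.inv_mk]
        have h1 : t.1 = s.1 := hc.1.symm
        have h2 : t.2 = !s.2 := by rw [hc.2, Bool.not_not]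
        have : FreeGroup.invRev [t] = [(t.1, !t.2)] := by
          simp [FreeGroup.invRev]
        rw [this, h1, h2, Bool.not_not]
      constructor
      · rw [htw, ih1.symm, hw, hu, List.getLast?_cons_cons]
      · have hdl : y.toWord.dropLast = t :: u.dropLast := by
          rw [hw, hu]; rfl
        have : FreeGroup.mk (t :: u.dropLast) =
            FreeGroup.mk a' * FreeGroup.mk (x.toWord.dropLast) := by
          rw [← hdl, ih2]
        have h3 : FreeGroup.mk [t] * FreeGroup.mk (u.dropLast) =
            FreeGroup.mk a' * FreeGroup.mk (x.toWord.dropLast) := by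
          rw [FreeGroup.mul_mk]; exact this
        rw [htw]
        calc FreeGroup.mk u.dropLast
            = (FreeGroup.mk [t])⁻¹ * (FreeGroup.mk [t] * FreeGroup.mk u.dropLast) := by group
          _ = FreeGroup.mk [s] * (FreeGroup.mk a' * FreeGroup.mk (x.toWord.dropLast)) := by
              rw [hts, h3]
          _ = FreeGroup.mk (s :: a') * FreeGroup.mk (x.toWord.dropLast) := by
              rw [hsplit, mul_assoc]
    · -- no cancellation
      rw [if_neg hc] at htw
      constructor
      · rw [htw, List.getLast?_cons_cons, ← hw, ih1]
      · have hdl : (s :: t :: u).dropLast = s :: (t :: u).dropLast := rfl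
        rw [htw, hdl, ← hw]
        rw [show (s :: y.toWord.dropLast) = [s] ++ y.toWord.dropLast from rfl,
          ← FreeGroup.mul_mk, ih2, hsplit, mul_assoc]

theorem lp_inner_single_single_eq_zero {a b : α} (h : a ≠ b) :
    (inner ℂ (lp.single (E := fun _ : α => ℂ) 2 a (1 : ℂ))
      (lp.single (E := fun _ : α => ℂ) 2 b (1 : ℂ)) : ℂ) = 0 := by
  rw [lp.inner_single_left, lp.single_apply_ne 2 b 1 h, inner_zero_right]

theorem lp_norm_single_one (a : α) :
    ‖lp.single (E := fun _ : α => ℂ) 2 a (1 : ℂ)‖ = 1 := by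
  simpa using lp.norm_single (E := fun _ : α => ℂ) (p := 2) (by norm_num)
    (fun _ => (1 : ℂ)) a

theorem gen_bound (s : Finset α)
    (ξ : lp (fun _ : α => ℂ) 2) (v : α → lp (fun _ : α => ℂ) 2)
    (horth : ∀ x ∈ s, ∀ y ∈ s, x ≠ y → (inner ℂ (v x) (v y) : ℂ) = 0)
    (hnorm : ∀ x ∈ s, ‖v x‖ ≤ 1) :
    ‖∑ x ∈ s, ξ x • v x‖ ≤ ‖ξ‖ := by
  have hsq : ‖∑ x ∈ s, ξ x • v x‖ ^ 2 = ∑ x ∈ s, ‖ξ x • v x‖ ^ 2 := by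
    have hinner : (inner ℂ (∑ x ∈ s, ξ x • v x) (∑ x ∈ s, ξ x • v x) : ℂ) =
        ∑ x ∈ s, (inner ℂ (ξ x • v x) (ξ x • v x) : ℂ) := by
      rw [sum_inner]
      refine Finset.sum_congr rfl fun x hx => ?_
      rw [inner_sum]
      refine Finset.sum_eq_single_of_mem x hx fun y hy hyx => ?_
      rw [inner_smul_left, inner_smul_right, horth x hx y hy (fun h => hyx h.symm),
        mul_zero, mul_zero]
    have hinner2 := (inner_self_eq_norm_sq_to_K (𝕜 := ℂ) (∑ x ∈ s, ξ x • v x)).symm.trans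
      (hinner.trans (Finset.sum_congr rfl fun x _ => inner_self_eq_norm_sq_to_K _))
    exact_mod_cast hinner2
  have hb : ∑ x ∈ s, ‖ξ x • v x‖ ^ 2 ≤ ∑ x ∈ s, ‖ξ x‖ ^ 2 := by
    refine Finset.sum_le_sum fun x hx => ?_
    rw [norm_smul, mul_pow]
    have h1 : ‖v x‖ ^ 2 ≤ 1 := by
      have := hnorm x hx
      nlinarith [norm_nonneg (v x)]
    calc ‖(ξ : ∀ _ : α, ℂ) x‖ ^ 2 * ‖v x‖ ^ 2 ≤ ‖(ξ : ∀ _ : α, ℂ) x‖ ^ 2 * 1 :=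
          mul_le_mul_of_nonneg_left h1 (by positivity)
      _ = ‖(ξ : ∀ _ : α, ℂ) x‖ ^ 2 := mul_one _
  have hbessel : ∑ x ∈ s, ‖ξ x‖ ^ 2 ≤ ‖ξ‖ ^ 2 := by
    have hnorm2 : ‖ξ‖ ^ (2 : ℝ≥0∞).toReal = ∑' x, ‖ξ x‖ ^ (2 : ℝ≥0∞).toReal :=
      lp.norm_rpow_eq_tsum (by norm_num) ξ
    have htr : ((2 : ℝ≥0∞)).toReal = (2 : ℝ) := by norm_num
    rw [htr] at hnorm2
    have hsummable : Summable (fun x => ‖ξ x‖ ^ (2 : ℝ)) := by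
      have := (lp.memℓp ξ).summable (p := 2) (by norm_num)
      simpa [htr] using this
    calc ∑ x ∈ s, ‖ξ x‖ ^ 2 = ∑ x ∈ s, ‖ξ x‖ ^ (2 : ℝ) := by
          refine Finset.sum_congr rfl fun x _ => ?_
          rw [← Real.rpow_natCast]; norm_num
      _ ≤ ∑' x, ‖ξ x‖ ^ (2 : ℝ) := Summable.sum_le_tsum s
          (fun x _ => Real.rpow_nonneg (norm_nonneg _) _) hsummable
      _ = ‖ξ‖ ^ (2 : ℝ) := hnorm2.symm
      _ = ‖ξ‖ ^ 2 := by rw [← Real.rpow_natCast]; norm_num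
  nlinarith [norm_nonneg (∑ x ∈ s, ξ x • v x), norm_nonneg ξ]

end Aux

/-- Monod: Let `G` be the free group on an infinite set `S`,
`H = ℓ²(G)`, `λ` the left regular representation, and `T_n` the operator sending
`δ_x` to `δ_{x₋}` when the last letter of the reduced word of `x` lies in
`S_n^{±1}` (for a subset `S_n ⊆ S` of `n` generators) and to `0` otherwise.
Then `‖T_n ∘ λ(g) − λ(g) ∘ T_n‖ ≤ 2` for every `g ∈ G`. -/
theorem stmt16 {S : Type*} [Infinite S] [DecidableEq S]
    (n : ℕ) (Sn : Finset S) (hSn : Sn.card = n)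
    (T : lp (fun _ : FreeGroup S => ℂ) 2 →L[ℂ] lp (fun _ : FreeGroup S => ℂ) 2)
    (L : FreeGroup S → (lp (fun _ : FreeGroup S => ℂ) 2 →L[ℂ] lp (fun _ : FreeGroup S => ℂ) 2))
    (hL : ∀ g x : FreeGroup S, L g (lp.single 2 x 1) = lp.single 2 (g * x) 1)
    (hT1 : ∀ (x : FreeGroup S) (l : S × Bool),
      x.toWord.getLast? = some l → l.1 ∈ Sn →
      T (lp.single 2 x 1) = lp.single 2 (FreeGroup.mk x.toWord.dropLast) 1)
    (hT0 : ∀ x : FreeGroup S,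
      (∀ l : S × Bool, x.toWord.getLast? = some l → l.1 ∉ Sn) →
      T (lp.single 2 x 1) = 0)
    (g : FreeGroup S) :
    ‖T.comp (L g) - (L g).comp T‖ ≤ 2 := by
  classical
  set W := g.toWord with hWdef
  set N := W.length with hNdef
  have hW : FreeGroup.reduce W = W := FreeGroup.reduce_toWord g
  have htake : ∀ k, FreeGroup.reduce (W.take k) = W.take k := fun k =>
    (freegroup_reduce_infix hW (List.take_append_drop k W).symm).1
  have hdrop : ∀ k, FreeGroup.reduce (W.drop k) = W.drop k := fun k =>
    (freegroup_reduce_infix hW (List.take_append_drop k W).symm).2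
  have hPword : ∀ k, (FreeGroup.mk (W.take k)).toWord = W.take k := fun k => by
    rw [FreeGroup.toWord_mk, htake k]
  -- the exceptional points
  set xk : ℕ → FreeGroup S := fun k => g⁻¹ * FreeGroup.mk (W.take k) with hxkdef
  have hgxk : ∀ k, g * xk k = FreeGroup.mk (W.take k) := fun k => by
    rw [hxkdef]; group
  have hxk_eq : ∀ k, xk k = (FreeGroup.mk (W.drop k))⁻¹ := by
    intro k
    have hg : g = FreeGroup.mk (W.take k) * FreeGroup.mk (W.drop k) := by
      rw [FreeGroup.mul_mk, List.take_append_drop, hWdef, FreeGroup.mk_toWord]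
    rw [hxkdef]
    dsimp only
    rw [hg]
    group
  have hxkword : ∀ k, (xk k).toWord = FreeGroup.invRev (W.drop k) := by
    intro k
    rw [hxk_eq k, FreeGroup.inv_mk, FreeGroup.toWord_mk, FreeGroup.reduce_invRev, hdrop k]
  have hxk_inj : ∀ k ≤ N, ∀ k' ≤ N, xk k = xk k' → k = k' := by
    intro k hk k' hk' he
    have : FreeGroup.invRev (W.drop k) = FreeGroup.invRev (W.drop k') := by
      rw [← hxkword k, ← hxkword k', he]
    have hlen := congrArg List.length this
    simp only [FreeGroup.invRev_length, List.length_drop] at hlen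
    omega
  set Ex : Finset (FreeGroup S) := (Finset.range (N + 1)).image xk with hExdef
  set u : FreeGroup S → lp (fun _ : FreeGroup S => ℂ) 2 :=
    fun x => T ((L g) (lp.single 2 x 1)) with hudef
  set v : FreeGroup S → lp (fun _ : FreeGroup S => ℂ) 2 :=
    fun x => (L g) (T (lp.single 2 x 1)) with hvdef
  -- commutator vanishes off Ex
  have hvanish : ∀ x : FreeGroup S, x ∉ Ex → u x - v x = 0 := by
    intro x hx
    simp only [hudef, hvdef]
    have hyp : ∀ k, k ≤ W.length → FreeGroup.mk W * x ≠ FreeGroup.mk (W.take k) := by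
      intro k hk heq
      apply hx
      rw [hExdef]
      refine Finset.mem_image.mpr ⟨k, Finset.mem_range.mpr (by omega), ?_⟩
      rw [hxkdef]
      dsimp only
      rw [← heq, hWdef, FreeGroup.mk_toWord]
      group
    obtain ⟨e1, e2⟩ := freegroup_key W x hyp
    rw [hWdef, FreeGroup.mk_toWord] at e1 e2
    rcases hlast : x.toWord.getLast? with _ | l
    · have hx0 : T (lp.single 2 x 1) = 0 :=
        hT0 x (fun l hl => by rw [hlast] at hl; cases hl)
      have hgx0 : T (lp.single 2 (g * x) 1) = 0 :=
        hT0 (g * x) (fun l hl => by rw [e1, hlast] at hl; cases hl)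
      rw [hL, hgx0, hx0, map_zero, sub_zero]
    · by_cases hm : l.1 ∈ Sn
      · rw [hL, hT1 (g * x) l (by rw [e1, hlast]) hm, hT1 x l hlast hm, hL, e2, sub_self]
      · have hx0 : T (lp.single 2 x 1) = 0 :=
          hT0 x (fun l' hl' => by rw [hlast] at hl'; cases hl'; exact hm)
        have hgx0 : T (lp.single 2 (g * x) 1) = 0 :=
          hT0 (g * x) (fun l' hl' => by rw [e1, hlast] at hl'; cases hl'; exact hm)
        rw [hL, hgx0, hx0, map_zero, sub_zero]
  -- descriptors of the two families
  have hu : ∀ k ≤ N, u (xk k) = 0 ∨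
      (1 ≤ k ∧ u (xk k) = lp.single 2 (FreeGroup.mk (W.take (k - 1))) 1) := by
    intro k hk
    have hbase : u (xk k) = T (lp.single 2 (FreeGroup.mk (W.take k)) 1) := by
      rw [hudef]; dsimp only; rw [hL, hgxk k]
    rcases Nat.eq_zero_or_pos k with hk0 | hk1
    · left
      rw [hbase]
      apply hT0
      intro l hl
      rw [hPword k, hk0] at hl
      simp at hl
    · rcases hlast : (FreeGroup.mk (W.take k)).toWord.getLast? with _ | l
      · left
        rw [hbase]
        exact hT0 _ (fun l hl => by rw [hlast] at hl; cases hl)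
      · by_cases hm : l.1 ∈ Sn
        · right
          refine ⟨hk1, ?_⟩
          rw [hbase, hT1 _ l hlast hm, hPword k]
          congr 2
          rw [List.dropLast_eq_take, List.take_take, List.length_take]
          congr 1
          omega
        · left
          rw [hbase]
          exact hT0 _ (fun l' hl' => by rw [hlast] at hl'; cases hl'; exact hm)
  have hv : ∀ k ≤ N, v (xk k) = 0 ∨
      (k < N ∧ v (xk k) =
        lp.single 2 (g * FreeGroup.mk ((FreeGroup.invRev (W.drop k)).dropLast)) 1) := by
    intro k hk
    rcases Nat.eq_or_lt_of_le hk with hkN | hkN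
    · left
      rw [hvdef]
      dsimp only
      have : T (lp.single 2 (xk k) 1) = 0 := by
        apply hT0
        intro l hl
        rw [hxkword k, hkN, hNdef, List.drop_length] at hl
        simp [FreeGroup.invRev] at hl
      rw [this, map_zero]
    · rcases hlast : (xk k).toWord.getLast? with _ | l
      · left
        rw [hvdef]
        dsimp only
        rw [hT0 _ (fun l hl => by rw [hlast] at hl; cases hl), map_zero]
      · by_cases hm : l.1 ∈ Sn
        · right
          refine ⟨hkN, ?_⟩
          rw [hvdef]
          dsimp only
          rw [hT1 _ l hlast hm, hL, hxkword k]
        · left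
          rw [hvdef]
          dsimp only
          rw [hT0 _ (fun l' hl' => by rw [hlast] at hl'; cases hl'; exact hm), map_zero]
  -- injectivity of targets
  have hutarget : ∀ k, 1 ≤ k → k ≤ N → ∀ k', 1 ≤ k' → k' ≤ N → k ≠ k' →
      FreeGroup.mk (W.take (k - 1)) ≠ FreeGroup.mk (W.take (k' - 1)) := by
    intro k hk1 hkN k' hk1' hkN' hne he
    have := congrArg List.length ((hPword (k - 1)).symm.trans (by rw [he, hPword]))
    simp only [List.length_take] at this
    omega
  have hvtarget : ∀ k, k < N → ∀ k', k' < N → k ≠ k' →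
      g * FreeGroup.mk ((FreeGroup.invRev (W.drop k)).dropLast) ≠
        g * FreeGroup.mk ((FreeGroup.invRev (W.drop k')).dropLast) := by
    intro k hkN k' hkN' hne he
    have he2 : FreeGroup.mk ((FreeGroup.invRev (W.drop k)).dropLast) =
        FreeGroup.mk ((FreeGroup.invRev (W.drop k')).dropLast) := by
      exact mul_left_cancel he
    have hred : ∀ j, FreeGroup.reduce ((FreeGroup.invRev (W.drop j)).dropLast) =
        (FreeGroup.invRev (W.drop j)).dropLast := fun j =>
      freegroup_reduce_dropLast (by rw [FreeGroup.reduce_invRev, hdrop j])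
    have hwords : (FreeGroup.invRev (W.drop k)).dropLast =
        (FreeGroup.invRev (W.drop k')).dropLast := by
      have h1 := congrArg FreeGroup.toWord he2
      rwa [FreeGroup.toWord_mk, FreeGroup.toWord_mk, hred k, hred k'] at h1
    have hlen := congrArg List.length hwords
    simp only [List.length_dropLast, FreeGroup.invRev_length, List.length_drop] at hlen
    omega
  -- main norm bound
  refine ContinuousLinearMap.opNorm_le_bound _ (by norm_num) fun ξ => ?_
  have hsum : HasSum (fun x : FreeGroup S => lp.single 2 x (ξ x)) ξ :=
    lp.hasSum_single (by norm_num) ξ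
  have hDsum : HasSum
      (fun x : FreeGroup S => (T.comp (L g) - (L g).comp T) (lp.single 2 x (ξ x)))
      ((T.comp (L g) - (L g).comp T) ξ) := hsum.mapL _
  have happ : ∀ x : FreeGroup S,
      (T.comp (L g) - (L g).comp T) (lp.single 2 x (ξ x)) = ξ x • (u x - v x) := by
    intro x
    have hsingle : lp.single (E := fun _ : FreeGroup S => ℂ) 2 x (ξ x)
        = ξ x • lp.single (E := fun _ : FreeGroup S => ℂ) 2 x (1 : ℂ) := by
      rw [← lp.single_smul, smul_eq_mul, mul_one]
    rw [hsingle]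
    simp only [ContinuousLinearMap.sub_apply, ContinuousLinearMap.comp_apply, map_smul,
      hudef, hvdef, smul_sub]
  have hDsum2 : HasSum (fun x : FreeGroup S => ξ x • (u x - v x))
      ((T.comp (L g) - (L g).comp T) ξ) := funext happ ▸ hDsum
  have hval : (T.comp (L g) - (L g).comp T) ξ = ∑ x ∈ Ex, ξ x • (u x - v x) :=
    hDsum2.unique (hasSum_sum_of_ne_finset_zero fun x hx => by rw [hvanish x hx, smul_zero])
  have hmem : ∀ x ∈ Ex, ∃ k ≤ N, xk k = x := by
    intro x hx
    obtain ⟨k, hk, hkx⟩ := Finset.mem_image.mp hx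
    exact ⟨k, Nat.lt_succ_iff.mp (Finset.mem_range.mp hk), hkx⟩
  have hubound : ‖∑ x ∈ Ex, ξ x • u x‖ ≤ ‖ξ‖ := by
    refine gen_bound Ex ξ u ?_ ?_
    · intro x hx y hy hxy
      obtain ⟨k, hkN, rfl⟩ := hmem x hx
      obtain ⟨k', hkN', rfl⟩ := hmem y hy
      have hkk' : k ≠ k' := fun h => hxy (by rw [h])
      rcases hu k hkN with h0 | ⟨hk1, hs⟩
      · rw [h0, inner_zero_left]
      rcases hu k' hkN' with h0' | ⟨hk1', hs'⟩
      · rw [h0', inner_zero_right]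
      rw [hs, hs']
      exact lp_inner_single_single_eq_zero (hutarget k hk1 hkN k' hk1' hkN' hkk')
    · intro x hx
      obtain ⟨k, hkN, rfl⟩ := hmem x hx
      rcases hu k hkN with h0 | ⟨-, hs⟩
      · rw [h0, norm_zero]; norm_num
      · rw [hs, lp_norm_single_one]
  have hvbound : ‖∑ x ∈ Ex, ξ x • v x‖ ≤ ‖ξ‖ := by
    refine gen_bound Ex ξ v ?_ ?_
    · intro x hx y hy hxy
      obtain ⟨k, hkN, rfl⟩ := hmem x hx
      obtain ⟨k', hkN', rfl⟩ := hmem y hy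
      have hkk' : k ≠ k' := fun h => hxy (by rw [h])
      rcases hv k hkN with h0 | ⟨hk1, hs⟩
      · rw [h0, inner_zero_left]
      rcases hv k' hkN' with h0' | ⟨hk1', hs'⟩
      · rw [h0', inner_zero_right]
      rw [hs, hs']
      exact lp_inner_single_single_eq_zero (hvtarget k hk1 k' hk1' hkk')
    · intro x hx
      obtain ⟨k, hkN, rfl⟩ := hmem x hx
      rcases hv k hkN with h0 | ⟨-, hs⟩
      · rw [h0, norm_zero]; norm_num
      · rw [hs, lp_norm_single_one]
  calc ‖(T.comp (L g) - (L g).comp T) ξ‖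
      = ‖(∑ x ∈ Ex, ξ x • u x) - ∑ x ∈ Ex, ξ x • v x‖ := by
        rw [hval, ← Finset.sum_sub_distrib]
        congr 1
        exact Finset.sum_congr rfl fun x _ => smul_sub _ _ _
    _ ≤ ‖∑ x ∈ Ex, ξ x • u x‖ + ‖∑ x ∈ Ex, ξ x • v x‖ := norm_sub_le _ _
    _ ≤ ‖ξ‖ + ‖ξ‖ := add_le_add hubound hvbound
    _ = 2 * ‖ξ‖ := by ring
end

section
/- With notation as in the Monod construction (G free on infinite S, H = ℓ²(G), T_n the partial shift operator associated to n generators S_n, λ the left regular representation): if β ∈ B(H) commutes with λ(g) for all g ∈ G, then ‖T_n − β‖ ≥ 2n / (2√(2n−1) + √(2n)) > √(2n)/3. Consequently the distance from T_n to the commutant of λ(G) tends to infinity with n. -/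
/-!
Put `u = β δ_e`. Since `β` commutes with left translations, it maps `f = 𝟏_{S_n^{±1}}` to
`∑_{x ∈ S_n^{±1}} λ(x) u`, of norm at most `2√(2n-1) ‖u‖` by Kesten's bound, while `T_n δ_e = 0`
gives `‖u‖ ≤ ‖T_n - β‖`. Since `T_n f = 2n δ_e`,
`2n = ‖T_n f‖ ≤ ‖T_n - β‖ (‖f‖ + 2√(2n-1)) = ‖T_n - β‖ (√(2n) + 2√(2n-1))`.
-/

open scoped ENNReal Pointwise

theorem Finset.sum_ite_inv_le_of_card_filter_le_one {ι : Type*} {K : Finset ι} {P : ι → Prop}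
    [DecidablePred P] (hP : (K.filter P).card ≤ 1) {a : ℝ} (ha : 1 ≤ a) :
    ∑ i ∈ K, (if P i then a else a⁻¹) ≤ a + (K.card - 1) * a⁻¹ := by
  rw [Finset.sum_ite, Finset.sum_const, Finset.sum_const, nsmul_eq_mul, nsmul_eq_mul]
  have hcard : ((K.filter P).card : ℝ) + (K.filter fun i => ¬ P i).card = K.card := by
    exact_mod_cast Finset.card_filter_add_card_filter_not P
  have hk : ((K.filter P).card : ℝ) ≤ 1 := by exact_mod_cast hP
  have hinv : a⁻¹ ≤ a := (inv_le_one_of_one_le₀ ha).trans ha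
  nlinarith

theorem Real.sqrt_two_mul_div_three_lt {r : ℝ} (hr : 0 < r) :
    √(2 * r) / 3 < 2 * r / (2 * √(2 * r - 1) + √(2 * r)) := by
  have hx : 0 < √(2 * r) := Real.sqrt_pos.mpr (by linarith)
  have hxy : √(2 * r - 1) < √(2 * r) :=
    (Real.sqrt_lt_sqrt_iff_of_pos (by linarith)).mpr (by linarith)
  have hx₂ : √(2 * r) ^ 2 = 2 * r := Real.sq_sqrt (by linarith)
  rw [div_lt_div_iff₀ (by norm_num) (by positivity)]
  nlinarith [mul_lt_mul_of_pos_left hxy hx]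

theorem ContinuousLinearMap.norm_apply_le_opNorm_sub_mul {𝕜 E F : Type*}
    [NontriviallyNormedField 𝕜] [SeminormedAddCommGroup E] [SeminormedAddCommGroup F]
    [NormedSpace 𝕜 E] [NormedSpace 𝕜 F] (T β : E →L[𝕜] F) {e f : E} (hTe : T e = 0) {c : ℝ}
    (hc : 0 ≤ c) (hβ : ‖β f‖ ≤ c * ‖β e‖) : ‖T f‖ ≤ ‖T - β‖ * (‖f‖ + c * ‖e‖) := by
  have hβe : ‖β e‖ ≤ ‖T - β‖ * ‖e‖ := by
    simpa [hTe] using (T - β).le_opNorm e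
  calc ‖T f‖ = ‖(T - β) f + β f‖ := by simp
    _ ≤ ‖T - β‖ * ‖f‖ + c * (‖T - β‖ * ‖e‖) :=
      norm_add_le_of_le ((T - β).le_opNorm f) (hβ.trans (by gcongr))
    _ = ‖T - β‖ * (‖f‖ + c * ‖e‖) := by ring

namespace lp

theorem hasSum_norm_sq {ι E : Type*} [NormedAddCommGroup E] (u : lp (fun _ : ι => E) 2) :
    HasSum (fun i => ‖u i‖ ^ 2) (‖u‖ ^ 2) := by
  simpa using lp.hasSum_norm (p := 2) (by norm_num) u

theorem norm_sum_single_one {ι 𝕜 : Type*} [DecidableEq ι] [NormedField 𝕜] (s : Finset ι) :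
    ‖∑ i ∈ s, lp.single 2 i (1 : 𝕜)‖ = √s.card := by
  have h := lp.norm_sum_single (E := fun _ : ι => 𝕜) (p := 2) (by norm_num) (fun _ => 1) s
  simp only [ENNReal.toReal_ofNat, Real.rpow_two, norm_one, one_pow, Finset.sum_const,
    nsmul_eq_mul, mul_one] at h
  rw [← h, Real.sqrt_sq (norm_nonneg _)]

section Group

variable {G : Type*} [Group G]

section Translate

variable [DecidableEq G] {𝕜 : Type*} [NormedField 𝕜] {p : ℝ≥0∞} [Fact (1 ≤ p)]

theorem apply_eq_of_map_single_eq_single_mul (hp : p ≠ ∞) (g : G)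
    (M : lp (fun _ : G => 𝕜) p →L[𝕜] lp (fun _ : G => 𝕜) p)
    (hM : ∀ x, M (lp.single p x 1) = lp.single p (g * x) 1) (u : lp (fun _ : G => 𝕜) p)
    (y : G) : M u y = u (g⁻¹ * y) := by
  have hterm : ∀ x, M (lp.single p x (u x)) y = if x = g⁻¹ * y then u (g⁻¹ * y) else 0 :=
    fun x => by
      rw [← mul_one (u x), ← smul_eq_mul, lp.single_smul, map_smul, hM]
      by_cases hx : x = g⁻¹ * y
      · simp [hx]
      · have : y ≠ g * x := fun h => hx (by rw [h, inv_mul_cancel_left])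
        simp [hx, this]
  have h : HasSum (fun x => M (lp.single p x (u x)) y) (M u y) :=
    (lp.hasSum_single hp u).mapL ((lp.evalCLM 𝕜 _ p y).comp M)
  simp only [hterm] at h
  exact h.unique (hasSum_ite_eq _ _)

theorem apply_sum_single_of_commute (hp : p ≠ ∞)
    (L : G → lp (fun _ : G => 𝕜) p →L[𝕜] lp (fun _ : G => 𝕜) p)
    (hL : ∀ g x, L g (lp.single p x 1) = lp.single p (g * x) 1)
    (β : lp (fun _ : G => 𝕜) p →L[𝕜] lp (fun _ : G => 𝕜) p) (hβ : ∀ g, β.comp (L g) = (L g).comp β)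
    (K : Finset G) (y : G) :
    β (∑ x ∈ K, lp.single p x 1) y = ∑ x ∈ K, β (lp.single p 1 1) (x⁻¹ * y) := by
  have hsum : β (∑ x ∈ K, lp.single p x 1) = ∑ x ∈ K, L x (β (lp.single p 1 1)) := by
    refine (map_sum β _ _).trans (Finset.sum_congr rfl fun x _ => ?_)
    rw [← ContinuousLinearMap.comp_apply, ← hβ, ContinuousLinearMap.comp_apply, hL, mul_one]
  rw [hsum, lp.coeFn_sum, Finset.sum_apply]
  exact Finset.sum_congr rfl fun x _ => apply_eq_of_map_single_eq_single_mul hp x (L x) (hL x) _ y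

end Translate

/-- Schur test, with `ω y z` the weight of the edge from `z` to `y = x * z`. -/
theorem norm_le_of_schur_test {E : Type*} [NormedAddCommGroup E] (K : Finset G)
    (ω : G → G → ℝ) (hω : ∀ y z, 0 < ω y z) {C : ℝ} (hC₁ : ∀ z, ∑ x ∈ K, ω (x * z) z ≤ C)
    (hC₂ : ∀ y, ∑ x ∈ K, (ω y (x⁻¹ * y))⁻¹ ≤ C) (u w : lp (fun _ : G => E) 2)
    (hw : ∀ y, ‖w y‖ ≤ ∑ x ∈ K, ‖u (x⁻¹ * y)‖) : ‖w‖ ≤ C * ‖u‖ := by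
  set U := fun z => ‖u z‖ ^ 2
  have hU := hasSum_norm_sq u
  have hC : 0 ≤ C := (Finset.sum_nonneg fun x _ => (hω _ _).le).trans (hC₁ 1)
  have hweighted : ∀ x ∈ K, Summable fun z => ω (x * z) z * U z := fun x hx =>
    Summable.of_nonneg_of_le (fun z => mul_nonneg (hω _ _).le (sq_nonneg _))
      (fun z => mul_le_mul_of_nonneg_right
        ((Finset.single_le_sum (f := fun x => ω (x * z) z) (fun x _ => (hω _ _).le) hx).trans
          (hC₁ z)) (sq_nonneg _))
      (hU.summable.mul_left C)
  have htranslate : ∀ x ∈ K, HasSum (fun y => ω y (x⁻¹ * y) * U (x⁻¹ * y))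
      (∑' z, ω (x * z) z * U z) := fun x hx => by
    simpa [Function.comp_def] using (Equiv.mulLeft x⁻¹).hasSum_iff.mpr (hweighted x hx).hasSum
  have hpoint : ∀ y, ‖w y‖ ^ 2 ≤ C * ∑ x ∈ K, ω y (x⁻¹ * y) * U (x⁻¹ * y) := fun y => by
    calc ‖w y‖ ^ 2 ≤ (∑ x ∈ K, ‖u (x⁻¹ * y)‖) ^ 2 := by gcongr; exact hw y
      _ ≤ (∑ x ∈ K, ω y (x⁻¹ * y) * U (x⁻¹ * y)) * ∑ x ∈ K, (ω y (x⁻¹ * y))⁻¹ :=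
        Finset.sum_sq_le_sum_mul_sum_of_sq_le_mul K
          (fun x _ => mul_nonneg (hω _ _).le (sq_nonneg _)) (fun x _ => (inv_pos.2 (hω _ _)).le)
          (fun x _ => by rw [mul_right_comm, mul_inv_cancel₀ (hω _ _).ne', one_mul])
      _ ≤ _ := by
        rw [mul_comm]
        exact mul_le_mul_of_nonneg_right (hC₂ y)
          (Finset.sum_nonneg fun x _ => mul_nonneg (hω _ _).le (sq_nonneg _))
  have hsq : ‖w‖ ^ 2 ≤ (C * ‖u‖) ^ 2 := by
    calc ‖w‖ ^ 2 ≤ C * ∑ x ∈ K, ∑' z, ω (x * z) z * U z :=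
          hasSum_le hpoint (hasSum_norm_sq w) ((hasSum_sum htranslate).mul_left C)
      _ = C * ∑' z, (∑ x ∈ K, ω (x * z) z) * U z := by
          rw [← Summable.tsum_finsetSum hweighted]
          simp_rw [Finset.sum_mul]
      _ ≤ C * ∑' z, C * U z := by
          gcongr
          · exact (summable_sum hweighted).congr fun z => (Finset.sum_mul ..).symm
          · exact hU.summable.mul_left C
          · exact hC₁ _
      _ = (C * ‖u‖) ^ 2 := by rw [tsum_mul_left, hU.tsum_eq]; ring
  exact le_of_sq_le_sq hsq (by positivity)

end Group

end lp

namespace FreeGroup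

variable {α : Type*}

theorem inv_mk_singleton (p : α × Bool) : (mk [p])⁻¹ = mk [(p.1, !p.2)] := by
  simp [inv_mk, invRev]

variable [DecidableEq α]

theorem toWord_mk_singleton (p : α × Bool) : (mk [p]).toWord = [p] := by
  rw [toWord_mk, reduce_singleton]

theorem mk_singleton_injective : Function.Injective fun p : α × Bool => mk [p] := fun p q h => by
  simpa [toWord_mk_singleton] using congrArg toWord h

theorem toWord_mk_singleton_mul (p : α × Bool) (z : FreeGroup α) :
    (mk [p] * z).toWord =
      if z.toWord.head? = some (p.1, !p.2) then z.toWord.tail else p :: z.toWord := by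
  conv_lhs => rw [← mk_toWord (x := z), mul_mk, toWord_mk, List.singleton_append, reduce.cons,
    reduce_toWord]
  obtain ⟨s, b⟩ := p
  rcases z.toWord with _ | ⟨⟨t, c⟩, tl⟩
  · simp
  · by_cases h : s = t ∧ b = !c
    · obtain ⟨rfl, rfl⟩ := h
      simp
    · have : (t, c) ≠ (s, !b) := by
        rintro ⟨rfl, rfl⟩
        simp at h
      simp [h, this]

theorem norm_mk_singleton_mul_lt_iff {p : α × Bool} {z : FreeGroup α} :
    norm (mk [p] * z) < norm z ↔ z.toWord.head? = some (p.1, !p.2) := by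
  rw [norm, norm, toWord_mk_singleton_mul]
  split_ifs with h
  · rcases hz : z.toWord with _ | ⟨a, tl⟩ <;> simp_all
  · simpa using h

theorem norm_mk_singleton_mul_ne (p : α × Bool) (z : FreeGroup α) :
    norm (mk [p] * z) ≠ norm z := by
  rw [norm, norm, toWord_mk_singleton_mul]
  split_ifs with h
  · rcases hz : z.toWord with _ | ⟨a, tl⟩ <;> simp_all
  · simp

def symmGenerators (s : Finset α) : Finset (FreeGroup α) :=
  (s ×ˢ Finset.univ).image fun p => mk [p]

theorem mem_symmGenerators {s : Finset α} {x : FreeGroup α} :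
    x ∈ symmGenerators s ↔ ∃ p : α × Bool, p.1 ∈ s ∧ mk [p] = x := by
  simp [symmGenerators]

theorem card_symmGenerators (s : Finset α) : (symmGenerators s).card = 2 * s.card := by
  rw [symmGenerators, Finset.card_image_of_injective _ mk_singleton_injective,
    Finset.card_product, Finset.card_univ, Fintype.card_bool, mul_comm]

theorem inv_mem_symmGenerators {s : Finset α} {x : FreeGroup α} (hx : x ∈ symmGenerators s) :
    x⁻¹ ∈ symmGenerators s := by
  obtain ⟨p, hp, rfl⟩ := mem_symmGenerators.mp hx
  exact mem_symmGenerators.mpr ⟨(p.1, !p.2), hp, (inv_mk_singleton p).symm⟩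

theorem inv_symmGenerators (s : Finset α) : (symmGenerators s)⁻¹ = symmGenerators s :=
  Finset.ext fun x => ⟨fun hx => by simpa using inv_mem_symmGenerators (Finset.mem_inv'.mp hx),
    fun hx => Finset.mem_inv'.mpr (inv_mem_symmGenerators hx)⟩

theorem norm_mul_ne_of_mem_symmGenerators {s : Finset α} {x : FreeGroup α}
    (hx : x ∈ symmGenerators s) (z : FreeGroup α) : norm (x * z) ≠ norm z := by
  obtain ⟨p, -, rfl⟩ := mem_symmGenerators.mp hx
  exact norm_mk_singleton_mul_ne p z

/-- Only the generator cancelling the first letter of `z` shortens it. -/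
theorem card_filter_norm_mul_lt_le_one (s : Finset α) (z : FreeGroup α) :
    ((symmGenerators s).filter fun x => norm (x * z) < norm z).card ≤ 1 := by
  refine Finset.card_le_one.mpr fun x hx y hy => ?_
  simp only [Finset.mem_filter, mem_symmGenerators] at hx hy
  obtain ⟨⟨p, -, rfl⟩, hpz⟩ := hx
  obtain ⟨⟨q, -, rfl⟩, hqz⟩ := hy
  rw [norm_mk_singleton_mul_lt_iff] at hpz hqz
  have := Option.some.inj (hpz.symm.trans hqz)
  simp only [Prod.mk.injEq, Bool.not_inj_iff] at this
  rw [Prod.ext this.1 this.2]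

/-- Kesten's bound `‖∑_{x ∈ S^{±1}} λ(x)‖ ≤ 2√(2|S| - 1)`, by the Schur test with weight
`a = √(2|S| - 1)` on length-decreasing edges and `a⁻¹` on length-increasing ones: every vertex has
at most one length-decreasing edge, so each weight sum is at most `a + (2|S| - 1) a⁻¹ = 2a`. -/
theorem norm_le_two_sqrt_mul_of_le_sum_translate {E : Type*} [NormedAddCommGroup E]
    (s : Finset α) (hs : s.Nonempty) (u w : lp (fun _ : FreeGroup α => E) 2)
    (hw : ∀ y, ‖w y‖ ≤ ∑ x ∈ symmGenerators s, ‖u (x⁻¹ * y)‖) :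
    ‖w‖ ≤ 2 * √(2 * s.card - 1) * ‖u‖ := by
  set a := √(2 * s.card - 1)
  have hs₁ : (1 : ℝ) ≤ s.card := by exact_mod_cast hs.card_pos
  have ha : 1 ≤ a := Real.one_le_sqrt.mpr (by linarith)
  have ha₀ : 0 < a := one_pos.trans_le ha
  have ha₂ : a ^ 2 = 2 * s.card - 1 := Real.sq_sqrt (by linarith)
  set ω : FreeGroup α → FreeGroup α → ℝ := fun y z => if norm y < norm z then a else a⁻¹
  have hω : ∀ y z, 0 < ω y z := fun y z => by
    simp only [ω]; split_ifs <;> positivity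
  have hω_inv : ∀ y z, norm y ≠ norm z → (ω y z)⁻¹ = ω z y := fun y z h => by
    simp only [ω]; split_ifs <;> first | omega | simp
  have hC₁ : ∀ z, ∑ x ∈ symmGenerators s, ω (x * z) z ≤ 2 * a := fun z => by
    refine (Finset.sum_ite_inv_le_of_card_filter_le_one
      (card_filter_norm_mul_lt_le_one s z) ha).trans_eq ?_
    rw [card_symmGenerators, Nat.cast_mul, Nat.cast_two, ← ha₂]
    field_simp
    ring
  refine lp.norm_le_of_schur_test _ ω hω hC₁ (fun y => ?_) u w hw
  calc ∑ x ∈ symmGenerators s, (ω y (x⁻¹ * y))⁻¹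
      = ∑ x ∈ symmGenerators s, ω (x⁻¹ * y) y := Finset.sum_congr rfl fun x hx =>
        hω_inv _ _ (norm_mul_ne_of_mem_symmGenerators (inv_mem_symmGenerators hx) y).symm
    _ = ∑ x ∈ symmGenerators s, ω (x * y) y := by
        rw [← Finset.sum_inv_index (f := fun x => ω (x * y) y), inv_symmGenerators]
    _ ≤ 2 * a := hC₁ y

end FreeGroup

theorem stmt17_general {S : Type*} [DecidableEq S]
    (n : ℕ) (hn : 1 ≤ n) (Sn : Finset S) (hSn : Sn.card = n)
    (T : lp (fun _ : FreeGroup S => ℂ) 2 →L[ℂ] lp (fun _ : FreeGroup S => ℂ) 2)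
    (L : FreeGroup S → (lp (fun _ : FreeGroup S => ℂ) 2 →L[ℂ] lp (fun _ : FreeGroup S => ℂ) 2))
    (hL : ∀ g x : FreeGroup S, L g (lp.single 2 x 1) = lp.single 2 (g * x) 1)
    (hT1 : ∀ (x : FreeGroup S) (l : S × Bool),
      x.toWord.getLast? = some l → l.1 ∈ Sn →
      T (lp.single 2 x 1) = lp.single 2 (FreeGroup.mk x.toWord.dropLast) 1)
    (hT0 : ∀ x : FreeGroup S,
      (∀ l : S × Bool, x.toWord.getLast? = some l → l.1 ∉ Sn) →
      T (lp.single 2 x 1) = 0)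
    (β : lp (fun _ : FreeGroup S => ℂ) 2 →L[ℂ] lp (fun _ : FreeGroup S => ℂ) 2)
    (hβ : ∀ g : FreeGroup S, β.comp (L g) = (L g).comp β) :
    (2 * n : ℝ) / (2 * Real.sqrt (2 * n - 1) + Real.sqrt (2 * n)) ≤ ‖T - β‖ ∧
      Real.sqrt (2 * n) / 3 <
        (2 * n : ℝ) / (2 * Real.sqrt (2 * n - 1) + Real.sqrt (2 * n)) := by
  set δ : FreeGroup S → lp (fun _ : FreeGroup S => ℂ) 2 := fun x => lp.single 2 x 1
  set K := FreeGroup.symmGenerators Sn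
  have hTδ₁ : T (δ 1) = 0 := hT0 1 (by simp)
  have hTK : ∀ x ∈ K, T (δ x) = δ 1 := fun x hx => by
    obtain ⟨p, hp, rfl⟩ := FreeGroup.mem_symmGenerators.mp hx
    rw [hT1 _ p (by simp) hp, FreeGroup.toWord_mk_singleton]
    rfl
  have hTf : ‖T (∑ x ∈ K, δ x)‖ = 2 * n := by
    rw [map_sum, Finset.sum_congr rfl hTK, Finset.sum_const, FreeGroup.card_symmGenerators, hSn,
      ← Nat.cast_smul_eq_nsmul ℂ, norm_smul, lp.norm_single (by norm_num), norm_one, mul_one,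
      Complex.norm_natCast, Nat.cast_mul, Nat.cast_two]
  have hkesten := FreeGroup.norm_le_two_sqrt_mul_of_le_sum_translate Sn
    (Finset.card_pos.mp (by omega)) (β (δ 1)) (β (∑ x ∈ K, δ x)) fun y => by
      rw [lp.apply_sum_single_of_commute (by norm_num) L hL β hβ]
      exact norm_sum_le _ _
  have hbound := T.norm_apply_le_opNorm_sub_mul β hTδ₁ (by positivity) hkesten
  rw [lp.norm_sum_single_one, hTf, lp.norm_single (by norm_num), norm_one, mul_one,
    FreeGroup.card_symmGenerators, hSn, Nat.cast_mul, Nat.cast_two] at hbound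
  constructor
  · rw [div_le_iff₀ (by positivity)]
    linarith
  · exact Real.sqrt_two_mul_div_three_lt (by positivity)

/-- Monod: With `G` free on an infinite set `S`, `H = ℓ²(G)`,
`λ` the left regular representation and `T_n` the partial shift operator
associated to `n` generators `S_n`: if `β ∈ B(H)` commutes with every `λ(g)`,
then `‖T_n − β‖ ≥ 2n/(2√(2n−1) + √(2n)) > √(2n)/3`; hence the distance from
`T_n` to the commutant of `λ(G)` tends to infinity with `n`. -/
theorem stmt17 {S : Type*} [Infinite S] [DecidableEq S]
    (n : ℕ) (hn : 1 ≤ n) (Sn : Finset S) (hSn : Sn.card = n)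
    (T : lp (fun _ : FreeGroup S => ℂ) 2 →L[ℂ] lp (fun _ : FreeGroup S => ℂ) 2)
    (L : FreeGroup S → (lp (fun _ : FreeGroup S => ℂ) 2 →L[ℂ] lp (fun _ : FreeGroup S => ℂ) 2))
    (hL : ∀ g x : FreeGroup S, L g (lp.single 2 x 1) = lp.single 2 (g * x) 1)
    (hT1 : ∀ (x : FreeGroup S) (l : S × Bool),
      x.toWord.getLast? = some l → l.1 ∈ Sn →
      T (lp.single 2 x 1) = lp.single 2 (FreeGroup.mk x.toWord.dropLast) 1)
    (hT0 : ∀ x : FreeGroup S,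
      (∀ l : S × Bool, x.toWord.getLast? = some l → l.1 ∉ Sn) →
      T (lp.single 2 x 1) = 0)
    (β : lp (fun _ : FreeGroup S => ℂ) 2 →L[ℂ] lp (fun _ : FreeGroup S => ℂ) 2)
    (hβ : ∀ g : FreeGroup S, β.comp (L g) = (L g).comp β) :
    (2 * n : ℝ) / (2 * Real.sqrt (2 * n - 1) + Real.sqrt (2 * n)) ≤ ‖T - β‖ ∧
      Real.sqrt (2 * n) / 3 <
        (2 * n : ℝ) / (2 * Real.sqrt (2 * n - 1) + Real.sqrt (2 * n)) :=
  stmt17_general n hn Sn hSn T L hL hT1 hT0 β hβ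
end

section
/- Let F_n be the free group on n ≥ 1 generators s₁,…,s_n and let 𝟏_S ∈ ℓ¹(F_n) be the indicator of S = {s₁^{±1},…,s_n^{±1}}. Then the operator norm of λ(𝟏_S) acting by convolution on ℓ²(F_n) equals 2√(2n−1). -/
open FreeGroup Finset
open scoped ComplexInnerProductSpace
namespace Kesten
variable {n : ℕ}





/-- A single letter of the free group. -/
def letter (i : Fin n) (b : Bool) : FreeGroup (Fin n) := FreeGroup.mk [(i, b)]

lemma toWord_letter (i : Fin n) (b : Bool) : (letter i b).toWord = [(i, b)] := by
  rw [letter, toWord_mk, reduce_singleton]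

lemma letter_true (i : Fin n) : letter i true = FreeGroup.of i := rfl

lemma letter_false (i : Fin n) : letter i false = (FreeGroup.of i)⁻¹ := by
  rw [← letter_true, letter, letter, inv_mk]; rfl

lemma letter_inv (i : Fin n) (b : Bool) : (letter i b)⁻¹ = letter i (!b) := by
  rw [letter, letter, inv_mk]; cases b <;> rfl

lemma letter_injective : Function.Injective (fun p : Fin n × Bool => letter p.1 p.2) := by
  intro p q h
  have h2 := congrArg FreeGroup.toWord h
  simp only [toWord_letter] at h2
  have h1 : (p.1, p.2) = (q.1, q.2) := (List.cons_eq_cons.mp h2).1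
  simpa using h1

lemma letter_mul (i : Fin n) (b : Bool) (x : FreeGroup (Fin n)) :
    letter i b * x = FreeGroup.mk ((i, b) :: x.toWord) := by
  conv_lhs => rw [← mk_toWord (x := x), letter, mul_mk]
  rfl

lemma toWord_letter_mul_nil {i : Fin n} {b : Bool} {x : FreeGroup (Fin n)}
    (h : x.toWord = []) : (letter i b * x).toWord = [(i, b)] := by
  rw [letter_mul, toWord_mk, FreeGroup.reduce.cons, reduce_toWord x, h]

lemma toWord_letter_mul_cancel {i : Fin n} {b : Bool} {x : FreeGroup (Fin n)} {hd tl}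
    (h : x.toWord = hd :: tl) (h1 : i = hd.1) (h2 : b = !hd.2) :
    (letter i b * x).toWord = tl := by
  rw [letter_mul, toWord_mk, FreeGroup.reduce.cons, reduce_toWord x, h]
  show (if (i, b).1 = hd.1 ∧ (i, b).2 = !hd.2 then tl else (i, b) :: hd :: tl) = tl
  exact if_pos ⟨h1, h2⟩

lemma toWord_letter_mul_noncancel {i : Fin n} {b : Bool} {x : FreeGroup (Fin n)} {hd tl}
    (h : x.toWord = hd :: tl) (hc : ¬(i = hd.1 ∧ b = !hd.2)) :
    (letter i b * x).toWord = (i, b) :: hd :: tl := by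
  rw [letter_mul, toWord_mk, FreeGroup.reduce.cons, reduce_toWord x, h]
  show (if (i, b).1 = hd.1 ∧ (i, b).2 = !hd.2 then tl else (i, b) :: hd :: tl) = _
  exact if_neg hc

lemma norm_letter_mul_cancel {i : Fin n} {b : Bool} {x : FreeGroup (Fin n)}
    (h : (letter i b * x).norm ≠ x.norm + 1) :
    ∃ hd tl, x.toWord = hd :: tl ∧ i = hd.1 ∧ b = !hd.2 ∧ (letter i b * x).toWord = tl := by
  rcases hx : x.toWord with _ | ⟨hd, tl⟩
  · exfalso; apply h
    rw [FreeGroup.norm, FreeGroup.norm, toWord_letter_mul_nil hx, hx]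
    rfl
  · by_cases hc : i = hd.1 ∧ b = !hd.2
    · exact ⟨hd, tl, rfl, hc.1, hc.2, toWord_letter_mul_cancel hx hc.1 hc.2⟩
    · exfalso; apply h
      rw [FreeGroup.norm, FreeGroup.norm, toWord_letter_mul_noncancel hx hc, hx]
      rfl

/-- Dichotomy: multiplying by a letter changes the length by exactly one. -/
lemma norm_letter_mul (i : Fin n) (b : Bool) (x : FreeGroup (Fin n)) :
    (letter i b * x).norm = x.norm + 1 ∨ (letter i b * x).norm + 1 = x.norm := by
  by_cases h : (letter i b * x).norm = x.norm + 1
  · exact Or.inl h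
  · obtain ⟨hd, tl, hx, -, -, hw⟩ := norm_letter_mul_cancel h
    right
    rw [FreeGroup.norm, FreeGroup.norm, hw, hx]
    rfl

/-- Uniqueness of the length-decreasing letter. -/
lemma down_letter_unique {i i' : Fin n} {b b' : Bool} {x : FreeGroup (Fin n)}
    (h : (letter i b * x).norm ≠ x.norm + 1) (h' : (letter i' b' * x).norm ≠ x.norm + 1) :
    (i, b) = (i', b') := by
  obtain ⟨hd, tl, hx, h1, h2, -⟩ := norm_letter_mul_cancel h
  obtain ⟨hd', tl', hx', h1', h2', -⟩ := norm_letter_mul_cancel h'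
  rw [hx] at hx'
  cases hx'
  simp [h1, h2, h1', h2']

/-- Existence of a length-decreasing letter for `x ≠ 1`. -/
lemma down_letter_exists {x : FreeGroup (Fin n)} (hx : x ≠ 1) :
    ∃ i b, (letter i b * x).norm + 1 = x.norm := by
  rcases h : x.toWord with _ | ⟨hd, tl⟩
  · exact absurd (toWord_eq_nil_iff.mp h) hx
  · refine ⟨hd.1, !hd.2, ?_⟩
    rw [FreeGroup.norm, FreeGroup.norm, toWord_letter_mul_cancel h rfl rfl, h]
    rfl


lemma reduce_tail {α : Type*} [DecidableEq α] {a : α × Bool} {t : List (α × Bool)}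
    (h : FreeGroup.reduce (a :: t) = a :: t) : FreeGroup.reduce t = t := by
  rw [FreeGroup.reduce.cons] at h
  rcases ht : FreeGroup.reduce t with _ | ⟨hd, tl⟩ <;> rw [ht] at h
  · change [a] = a :: t at h
    obtain ⟨-, h2⟩ := List.cons_eq_cons.mp h
    rw [← h2]
  · change (if a.1 = hd.1 ∧ a.2 = !hd.2 then tl else a :: hd :: tl) = a :: t at h
    split_ifs at h
    · exfalso
      have hl := (FreeGroup.reduce.red (L := t)).length_le
      rw [ht] at hl
      have := congrArg List.length h
      simp at this hl
      omega
    · obtain ⟨-, h2⟩ := List.cons_eq_cons.mp h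
      rw [← h2]

lemma reduce_cons_iff {α : Type*} [DecidableEq α] {a hd : α × Bool} {tl : List (α × Bool)}
    (ht : FreeGroup.reduce (hd :: tl) = hd :: tl) :
    FreeGroup.reduce (a :: hd :: tl) = a :: hd :: tl ↔ ¬(a.1 = hd.1 ∧ a.2 = !hd.2) := by
  rw [FreeGroup.reduce.cons, ht]
  change (if a.1 = hd.1 ∧ a.2 = !hd.2 then tl else a :: hd :: tl) = _ ↔ _
  constructor
  · intro h hc
    rw [if_pos hc] at h
    have := congrArg List.length h
    simp at this
    omega
  · intro hc
    rw [if_neg hc]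

def lists (n : ℕ) : ℕ → Finset (List (Fin n × Bool))
  | 0 => {[]}
  | j + 1 => (Finset.univ ×ˢ lists n j).image fun p => p.1 :: p.2

lemma mem_lists {j : ℕ} {l : List (Fin n × Bool)} : l ∈ lists n j ↔ l.length = j := by
  induction j generalizing l with
  | zero => simp [lists, List.length_eq_zero_iff]
  | succ j ih =>
    cases l with
    | nil => simp [lists]
    | cons a t => simp [lists, ih, eq_comm (a := a) ]

def redLists (n j : ℕ) : Finset (List (Fin n × Bool)) :=
  (lists n j).filter fun l => FreeGroup.reduce l = l

lemma mem_redLists {j : ℕ} {l : List (Fin n × Bool)} :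
    l ∈ redLists n j ↔ l.length = j ∧ FreeGroup.reduce l = l := by
  simp [redLists, mem_lists]

lemma card_redLists_zero : (redLists n 0).card = 1 := by
  have : redLists n 0 = {[]} := by
    ext l; simp [mem_redLists, List.length_eq_zero_iff]
    rintro rfl; rfl
  rw [this, card_singleton]

lemma card_redLists_one : (redLists n 1).card = 2 * n := by
  have h1 : redLists n 1 = lists n 1 := by
    rw [redLists, Finset.filter_true_of_mem]
    intro l hl
    obtain ⟨a, rfl⟩ := List.length_eq_one_iff.mp (mem_lists.mp hl)
    exact FreeGroup.reduce_singleton a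
  rw [h1, lists]
  rw [Finset.card_image_of_injective _ (fun p q h => by
    obtain ⟨h1, h2⟩ := List.cons_eq_cons.mp h; exact Prod.ext h1 h2)]
  simp [lists, mul_comm]

lemma card_redLists_step (j : ℕ) :
    (redLists n (j + 2)).card = (2 * n - 1) * (redLists n (j + 1)).card := by
  rw [Finset.card_eq_sum_card_fiberwise (f := List.tail) (t := redLists n (j + 1)) ?hmem]
  case hmem =>
    intro l hl
    rw [Finset.mem_coe, mem_redLists] at hl
    rcases l with _ | ⟨a, t⟩
    · simp at hl
    · rw [Finset.mem_coe, mem_redLists]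
      refine ⟨by simpa using hl.1, reduce_tail hl.2⟩
  rw [Finset.sum_congr rfl (g := fun _ => 2 * n - 1) ?hfib, Finset.sum_const, smul_eq_mul,
    mul_comm]
  case hfib =>
    intro t ht
    show _ = 2 * n - 1
    rw [mem_redLists] at ht
    rcases t with _ | ⟨hd, tt⟩
    · simp at ht
    · have hfil : ((redLists n (j + 2)).filter fun l => l.tail = hd :: tt) =
          (Finset.univ.filter fun a : Fin n × Bool => ¬(a.1 = hd.1 ∧ a.2 = !hd.2)).image
            (fun a => a :: hd :: tt) := by
        ext l
        simp only [Finset.mem_filter, mem_redLists, Finset.mem_image, Finset.mem_univ, true_and]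
        constructor
        · rintro ⟨⟨hlen, hred⟩, htl⟩
          rcases l with _ | ⟨a, t'⟩
          · simp at hlen
          · simp only [List.tail_cons] at htl
            subst htl
            exact ⟨a, (reduce_cons_iff ht.2).mp hred, rfl⟩
        · rintro ⟨a, ha, rfl⟩
          exact ⟨⟨by simpa using ht.1, (reduce_cons_iff ht.2).mpr ha⟩, rfl⟩
      rw [hfil, Finset.card_image_of_injective _ (fun a b h => (List.cons_eq_cons.mp h).1)]
      have hsingle : (Finset.univ.filter fun a : Fin n × Bool => a.1 = hd.1 ∧ a.2 = !hd.2)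
          = {(hd.1, !hd.2)} := by
        ext a
        simp [Prod.ext_iff]
      have hcards := Finset.card_filter_add_card_filter_not
        (s := (Finset.univ : Finset (Fin n × Bool)))
        (p := fun a => a.1 = hd.1 ∧ a.2 = !hd.2)
      rw [hsingle, card_singleton] at hcards
      have : (Finset.univ : Finset (Fin n × Bool)).card = 2 * n := by simp [mul_comm]
      omega

def sph (n j : ℕ) : Finset (FreeGroup (Fin n)) := (redLists n j).image FreeGroup.mk

lemma mem_sph {j : ℕ} {x : FreeGroup (Fin n)} : x ∈ sph n j ↔ x.norm = j := by
  constructor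
  · intro hx
    obtain ⟨l, hl, rfl⟩ := Finset.mem_image.mp hx
    rw [mem_redLists] at hl
    rw [FreeGroup.norm, toWord_mk, hl.2, hl.1]
  · intro hx
    refine Finset.mem_image.mpr ⟨x.toWord, mem_redLists.mpr ⟨hx, reduce_toWord x⟩, mk_toWord⟩

lemma card_sph (j : ℕ) : (sph n j).card = (redLists n j).card := by
  refine Finset.card_image_of_injOn ?_
  intro l hl l' hl' h
  rw [Finset.mem_coe, mem_redLists] at hl hl'
  have := FreeGroup.reduce.sound h
  rw [hl.2, hl'.2] at this
  exact this

lemma card_sph_zero : (sph n 0).card = 1 := by rw [card_sph, card_redLists_zero]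

lemma card_sph_succ (j : ℕ) : (sph n (j + 1)).card = 2 * n * (2 * n - 1) ^ j := by
  induction j with
  | zero => rw [card_sph, card_redLists_one]; simp
  | succ j ih =>
    rw [card_sph, card_redLists_step, ← card_sph, ih, pow_succ]
    ring


noncomputable abbrev H (n : ℕ) := lp (fun _ : FreeGroup (Fin n) => ℂ) 2

/-- finite linear combination of basis vectors -/
noncomputable def elt (B : Finset (FreeGroup (Fin n))) (φ : FreeGroup (Fin n) → ℂ) : H n :=
  ∑ x ∈ B, φ x • lp.single 2 x 1

lemma single_apply' (z x : FreeGroup (Fin n)) :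
    (lp.single 2 z (1 : ℂ) : H n) x = if x = z then (1 : ℂ) else 0 := by
  rw [lp.single_apply]
  split_ifs with h
  · subst h; simp
  · simp [Pi.single_apply, h]

lemma inner_single_single (x z : FreeGroup (Fin n)) :
    ⟪(lp.single 2 x 1 : H n), lp.single 2 z 1⟫ = if x = z then 1 else 0 := by
  rw [lp.inner_single_left, single_apply', RCLike.inner_apply]
  simp [← Complex.ofReal_pow]

lemma inner_elt_single (B : Finset (FreeGroup (Fin n))) (φ : FreeGroup (Fin n) → ℂ)
    (z : FreeGroup (Fin n)) :
    ⟪elt B φ, lp.single 2 z 1⟫ = if z ∈ B then (starRingEnd ℂ) (φ z) else 0 := by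
  rw [elt, sum_inner]
  rw [Finset.sum_congr rfl (g := fun x => if x = z then (starRingEnd ℂ) (φ x) else 0)
    (fun x _ => by rw [inner_smul_left, inner_single_single, mul_ite, mul_one, mul_zero])]
  exact Finset.sum_ite_eq' B z _

lemma norm_elt_sq (B : Finset (FreeGroup (Fin n))) (φ : FreeGroup (Fin n) → ℂ) :
    ‖elt B φ‖ ^ 2 = ∑ x ∈ B, ‖φ x‖ ^ 2 := by
  have h : ⟪elt B φ, elt B φ⟫ = ((∑ x ∈ B, ‖φ x‖ ^ 2 : ℝ) : ℂ) := by
    nth_rewrite 2 [elt]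
    rw [inner_sum]
    rw [Finset.sum_congr rfl (g := fun x => ((‖φ x‖ ^ 2 : ℝ) : ℂ))
      (fun x hx => by
        rw [inner_smul_right, inner_elt_single, if_pos hx, mul_comm, RCLike.conj_mul]
        norm_cast)]
    push_cast
    rfl
  rw [@norm_sq_eq_re_inner ℂ, h]
  simp [← Complex.ofReal_pow]



/-- the value `√(2n-1)`. -/
noncomputable def rK (n : ℕ) : ℝ := Real.sqrt (2 * n - 1)

lemma one_le_rK (hn : 1 ≤ n) : 1 ≤ rK n := by
  have h1 : (1 : ℝ) ≤ n := by exact_mod_cast hn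
  have h0 : (0 : ℝ) ≤ 2 * n - 1 := by linarith
  rw [rK]
  nlinarith [Real.sq_sqrt h0, Real.sqrt_nonneg (2 * (n : ℝ) - 1)]

lemma rK_pos (hn : 1 ≤ n) : 0 < rK n := lt_of_lt_of_le one_pos (one_le_rK hn)

lemma rK_sq (hn : 1 ≤ n) : rK n ^ 2 = 2 * n - 1 := by
  rw [rK, Real.sq_sqrt]
  have : (1 : ℝ) ≤ n := by exact_mod_cast hn
  linarith

lemma rK_mul_inv (hn : 1 ≤ n) : (2 * (n : ℝ) - 1) * (rK n)⁻¹ = rK n := by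
  rw [← rK_sq hn]
  field_simp [(rK_pos hn).ne']

/-- Key geometric lemma: weighted count of neighbours. -/
lemma key_sum (hn : 1 ≤ n) (x : FreeGroup (Fin n)) :
    ∑ p : Fin n × Bool,
      (if (letter p.1 p.2 * x).norm = x.norm + 1 then (rK n)⁻¹ else rK n) ≤ 2 * rK n := by
  classical
  set P : Fin n × Bool → Prop := fun p => (letter p.1 p.2 * x).norm = x.norm + 1 with hP
  rw [← Finset.sum_filter_add_sum_filter_not Finset.univ P]
  rw [Finset.sum_congr rfl (g := fun _ => (rK n)⁻¹)
    (fun p hp => if_pos (Finset.mem_filter.mp hp).2)]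
  rw [Finset.sum_congr rfl (g := fun _ => rK n)
    (fun p hp => if_neg (Finset.mem_filter.mp hp).2)]
  rw [Finset.sum_const, Finset.sum_const, nsmul_eq_mul, nsmul_eq_mul]
  have hr := rK_pos hn
  have hr1 := one_le_rK hn
  have hNle : ((Finset.univ.filter fun p => ¬ P p).card : ℕ) ≤ 1 := by
    apply Finset.card_le_one.mpr
    intro a ha b hb
    rw [Finset.mem_filter] at ha hb
    have := down_letter_unique ha.2 hb.2
    rw [← @Prod.mk.eta _ _ a, ← @Prod.mk.eta _ _ b]
    exact this
  have hcards : (Finset.univ.filter P).card + (Finset.univ.filter fun p => ¬ P p).card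
      = 2 * n := by
    rw [Finset.card_filter_add_card_filter_not]
    simp [mul_comm]
  set a := (Finset.univ.filter P).card
  set c := (Finset.univ.filter fun p => ¬ P p).card
  interval_cases c
  · -- c = 0, a = 2n
    have ha : a = 2 * n := by omega
    rw [ha]
    push_cast
    calc 2 * (n : ℝ) * (rK n)⁻¹ + 0 * rK n = (2 * n - 1) * (rK n)⁻¹ + (rK n)⁻¹ := by ring
    _ ≤ rK n + rK n := by
        rw [rK_mul_inv hn]
        have hinv : (rK n)⁻¹ * rK n = 1 := inv_mul_cancel₀ hr.ne'
        nlinarith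
    _ = 2 * rK n := by ring
  · -- c = 1, a = 2n - 1
    have ha : (a : ℝ) = 2 * n - 1 := by
      have : a = 2 * n - 1 := by omega
      rw [this]
      have h2 : 1 ≤ 2 * n := by omega
      push_cast [h2]
      ring
    rw [ha, rK_mul_inv hn]
    push_cast
    linarith

/-- equivalence of the two weight conventions -/
lemma ite_down_eq (hn : 1 ≤ n) (x : FreeGroup (Fin n)) (p : Fin n × Bool) :
    (if x.norm = (letter p.1 p.2 * x).norm + 1 then rK n else (rK n)⁻¹) =
    (if (letter p.1 p.2 * x).norm = x.norm + 1 then (rK n)⁻¹ else rK n) := by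
  rcases norm_letter_mul p.1 p.2 x with h | h <;> split_ifs with h1 h2 <;> try rfl
  all_goals omega

lemma sum_single_letters (A : H n →L[ℂ] H n)
    (hA : ∀ x : FreeGroup (Fin n),
      A (lp.single 2 x 1) =
        ∑ i : Fin n, (lp.single 2 (FreeGroup.of i * x) 1 +
          lp.single 2 ((FreeGroup.of i)⁻¹ * x) 1))
    (x : FreeGroup (Fin n)) :
    A (lp.single 2 x 1) = ∑ p : Fin n × Bool, lp.single 2 (letter p.1 p.2 * x) 1 := by
  rw [hA, Fintype.sum_prod_type]
  apply Finset.sum_congr rfl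
  intro i _
  rw [Fintype.sum_bool]
  rw [letter_true, letter_false]

lemma A_elt (A : H n →L[ℂ] H n)
    (hA : ∀ x : FreeGroup (Fin n),
      A (lp.single 2 x 1) =
        ∑ i : Fin n, (lp.single 2 (FreeGroup.of i * x) 1 +
          lp.single 2 ((FreeGroup.of i)⁻¹ * x) 1))
    (B : Finset (FreeGroup (Fin n))) (φ : FreeGroup (Fin n) → ℂ) :
    A (elt B φ) =
      ∑ p : Fin n × Bool, ∑ x ∈ B, φ x • lp.single 2 (letter p.1 p.2 * x) 1 := by
  rw [elt, map_sum]
  rw [Finset.sum_congr rfl (g := fun x => ∑ p : Fin n × Bool,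
      φ x • lp.single 2 (letter p.1 p.2 * x) 1)
    (fun x _ => by rw [map_smul, sum_single_letters A hA x, Finset.smul_sum])]
  exact Finset.sum_comm

lemma norm_A_elt_le (hn : 1 ≤ n) (A : H n →L[ℂ] H n)
    (hA : ∀ x : FreeGroup (Fin n),
      A (lp.single 2 x 1) =
        ∑ i : Fin n, (lp.single 2 (FreeGroup.of i * x) 1 +
          lp.single 2 ((FreeGroup.of i)⁻¹ * x) 1))
    (B : Finset (FreeGroup (Fin n))) (φ : FreeGroup (Fin n) → ℂ) :
    ‖A (elt B φ)‖ ≤ 2 * rK n * ‖elt B φ‖ := by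
  classical
  have hr := rK_pos hn
  set r := rK n with hrdef
  set u : FreeGroup (Fin n) → ℝ := fun x => if x ∈ B then ‖φ x‖ else 0 with hu
  have hu0 : ∀ x, 0 ≤ u x := fun x => by
    rw [hu]; dsimp only; split_ifs; exacts [norm_nonneg _, le_refl 0]
  have huB : ∀ x ∉ B, u x = 0 := fun x hx => by rw [hu]; exact if_neg hx
  set Y : Finset (FreeGroup (Fin n)) :=
    (Finset.univ ×ˢ B).image
      (fun pq : (Fin n × Bool) × FreeGroup (Fin n) => letter pq.1.1 pq.1.2 * pq.2) with hY
  set ψ : FreeGroup (Fin n) → ℂ := fun y =>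
    ∑ p : Fin n × Bool,
      (if (letter p.1 p.2)⁻¹ * y ∈ B then φ ((letter p.1 p.2)⁻¹ * y) else 0) with hψ
  -- Step A : A (elt B φ) = elt Y ψ
  have hAe : A (elt B φ) = elt Y ψ := by
    rw [A_elt A hA]
    rw [Finset.sum_congr rfl (g := fun p : Fin n × Bool => ∑ y ∈ Y,
        (if (letter p.1 p.2)⁻¹ * y ∈ B then φ ((letter p.1 p.2)⁻¹ * y) else 0) •
          lp.single 2 y 1) ?_]
    · rw [Finset.sum_comm, elt]
      apply Finset.sum_congr rfl; intro y _
      rw [← Finset.sum_smul, hψ]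
    · intro p _
      refine Eq.symm ?_
      have hsub : B.image (fun x => letter p.1 p.2 * x) ⊆ Y := by
        intro y hy
        obtain ⟨x, hx, rfl⟩ := Finset.mem_image.mp hy
        exact Finset.mem_image.mpr ⟨(p, x), Finset.mem_product.mpr ⟨Finset.mem_univ _, hx⟩, rfl⟩
      have hzero : ∀ y ∈ Y, y ∉ B.image (fun x => letter p.1 p.2 * x) →
          ((if (letter p.1 p.2)⁻¹ * y ∈ B then φ ((letter p.1 p.2)⁻¹ * y) else 0) •
            lp.single 2 y 1 : H n) = 0 := by
        intro y _ hy
        have hnb : ¬((letter p.1 p.2)⁻¹ * y ∈ B) := by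
          intro hmem
          exact hy (Finset.mem_image.mpr ⟨(letter p.1 p.2)⁻¹ * y, hmem, by
            rw [mul_inv_cancel_left]⟩)
        rw [if_neg hnb, zero_smul]
      rw [← Finset.sum_subset hsub hzero]
      have hinj : ∀ x ∈ B, ∀ x' ∈ B, letter p.1 p.2 * x = letter p.1 p.2 * x' → x = x' :=
        fun x _ x' _ h => mul_left_cancel h
      rw [Finset.sum_image hinj]
      apply Finset.sum_congr rfl
      intro x hx
      rw [inv_mul_cancel_left, if_pos hx]
  -- Step B : bound the coefficients
  have h2 : ‖A (elt B φ)‖ ^ 2 ≤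
      ∑ y ∈ Y, (∑ p : Fin n × Bool, u ((letter p.1 p.2)⁻¹ * y)) ^ 2 := by
    rw [hAe, norm_elt_sq]
    apply Finset.sum_le_sum
    intro y _
    have hby : ‖ψ y‖ ≤ ∑ p : Fin n × Bool, u ((letter p.1 p.2)⁻¹ * y) := by
      rw [hψ]
      dsimp only
      refine (norm_sum_le _ _).trans ?_
      apply Finset.sum_le_sum; intro p _
      rw [hu]; dsimp only
      split_ifs with h
      · exact le_refl _
      · simp
    exact pow_le_pow_left₀ (norm_nonneg _) hby 2
  -- Step C : Cauchy-Schwarz at each point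
  have hCS : ∀ y : FreeGroup (Fin n),
      (∑ p : Fin n × Bool, u ((letter p.1 p.2)⁻¹ * y)) ^ 2 ≤
      (2 * r) * ∑ p : Fin n × Bool, u ((letter p.1 p.2)⁻¹ * y) ^ 2 *
        (if ((letter p.1 p.2)⁻¹ * y).norm = y.norm + 1 then r else r⁻¹) := by
    intro y
    set w : Fin n × Bool → ℝ :=
      fun p => if ((letter p.1 p.2)⁻¹ * y).norm = y.norm + 1 then r⁻¹ else r with hw
    have hwpos : ∀ p, 0 < w p := fun p => by
      rw [hw]; dsimp only; split_ifs; exacts [inv_pos.mpr hr, hr]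
    have hsumw : ∑ p : Fin n × Bool, w p ≤ 2 * r := by
      have := Fintype.sum_equiv
        (Equiv.prodCongr (Equiv.refl (Fin n)) (Function.Involutive.toPerm Bool.not Bool.not_not))
        w (fun p : Fin n × Bool => if (letter p.1 p.2 * y).norm = y.norm + 1 then r⁻¹ else r)
        (fun p => by
          rw [hw]
          simp only [Equiv.prodCongr_apply, Equiv.coe_refl, Function.Involutive.coe_toPerm,
            Prod.map, id_eq, letter_inv]
          rfl)
      rw [this]
      exact key_sum hn y
    have hcs := Finset.sum_mul_sq_le_sq_mul_sq Finset.univ (fun p => Real.sqrt (w p))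
      (fun p => u ((letter p.1 p.2)⁻¹ * y) / Real.sqrt (w p))
    have hL : ∀ p : Fin n × Bool, Real.sqrt (w p) * (u ((letter p.1 p.2)⁻¹ * y) / Real.sqrt (w p))
        = u ((letter p.1 p.2)⁻¹ * y) := fun p => by
      rw [mul_div_cancel₀]
      exact (Real.sqrt_pos.mpr (hwpos p)).ne'
    have hsq : ∀ p : Fin n × Bool, Real.sqrt (w p) ^ 2 = w p := fun p =>
      Real.sq_sqrt (hwpos p).le
    rw [Finset.sum_congr rfl (fun p _ => hL p)] at hcs
    rw [Finset.sum_congr rfl (fun p _ => hsq p)] at hcs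
    refine hcs.trans ?_
    have hwconv : ∀ p : Fin n × Bool, (w p)⁻¹ =
        (if ((letter p.1 p.2)⁻¹ * y).norm = y.norm + 1 then r else r⁻¹) := fun p => by
      rw [hw]; dsimp only; split_ifs; exacts [inv_inv r, rfl]
    have hterm : ∀ p : Fin n × Bool,
        (u ((letter p.1 p.2)⁻¹ * y) / Real.sqrt (w p)) ^ 2 =
        u ((letter p.1 p.2)⁻¹ * y) ^ 2 *
          (if ((letter p.1 p.2)⁻¹ * y).norm = y.norm + 1 then r else r⁻¹) := fun p => by
      rw [div_pow, hsq p, div_eq_mul_inv, hwconv p]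
    rw [Finset.sum_congr rfl (fun p _ => hterm p)]
    apply mul_le_mul_of_nonneg_right hsumw
    apply Finset.sum_nonneg
    intro p _
    apply mul_nonneg (sq_nonneg _)
    split_ifs
    exacts [hr.le, (inv_pos.mpr hr).le]
  -- Step D : change variables and sum
  have h3 : ∑ y ∈ Y, ∑ p : Fin n × Bool, u ((letter p.1 p.2)⁻¹ * y) ^ 2 *
        (if ((letter p.1 p.2)⁻¹ * y).norm = y.norm + 1 then r else r⁻¹) ≤
      (2 * r) * ∑ x ∈ B, u x ^ 2 := by
    rw [Finset.sum_comm]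
    have hs_nonneg : ∀ x : FreeGroup (Fin n), ∀ p : Fin n × Bool,
        0 ≤ u x ^ 2 * (if x.norm = (letter p.1 p.2 * x).norm + 1 then r else r⁻¹) := by
      intro x p
      apply mul_nonneg (sq_nonneg _)
      split_ifs
      exacts [hr.le, (inv_pos.mpr hr).le]
    have hple : ∀ p : Fin n × Bool,
        (∑ y ∈ Y, u ((letter p.1 p.2)⁻¹ * y) ^ 2 *
          (if ((letter p.1 p.2)⁻¹ * y).norm = y.norm + 1 then r else r⁻¹)) ≤
        ∑ x ∈ B, u x ^ 2 *
          (if (letter p.1 p.2 * x).norm = x.norm + 1 then r⁻¹ else r) := by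
      intro p
      have hinjY : ∀ y ∈ Y, ∀ y' ∈ Y,
          (letter p.1 p.2)⁻¹ * y = (letter p.1 p.2)⁻¹ * y' → y = y' :=
        fun y _ y' _ h => mul_left_cancel h
      have himg : ∑ y ∈ Y, u ((letter p.1 p.2)⁻¹ * y) ^ 2 *
            (if ((letter p.1 p.2)⁻¹ * y).norm = y.norm + 1 then r else r⁻¹) =
          ∑ x ∈ Y.image (fun y => (letter p.1 p.2)⁻¹ * y),
            u x ^ 2 * (if x.norm = (letter p.1 p.2 * x).norm + 1 then r else r⁻¹) := by
        rw [Finset.sum_image hinjY]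
        apply Finset.sum_congr rfl
        intro y _
        rw [mul_inv_cancel_left]
      rw [himg]
      calc ∑ x ∈ Y.image (fun y => (letter p.1 p.2)⁻¹ * y),
            u x ^ 2 * (if x.norm = (letter p.1 p.2 * x).norm + 1 then r else r⁻¹)
          ≤ ∑ x ∈ Y.image (fun y => (letter p.1 p.2)⁻¹ * y) ∪ B,
            u x ^ 2 * (if x.norm = (letter p.1 p.2 * x).norm + 1 then r else r⁻¹) :=
          Finset.sum_le_sum_of_subset_of_nonneg Finset.subset_union_left
            (fun x _ _ => hs_nonneg x p)
        _ = ∑ x ∈ B, u x ^ 2 * (if x.norm = (letter p.1 p.2 * x).norm + 1 then r else r⁻¹) := by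
          refine (Finset.sum_subset Finset.subset_union_right ?_).symm
          intro x _ hx
          rw [huB x hx]
          ring
        _ = ∑ x ∈ B, u x ^ 2 *
            (if (letter p.1 p.2 * x).norm = x.norm + 1 then r⁻¹ else r) := by
          apply Finset.sum_congr rfl
          intro x _
          rw [ite_down_eq hn]
    calc ∑ p : Fin n × Bool, ∑ y ∈ Y, u ((letter p.1 p.2)⁻¹ * y) ^ 2 *
          (if ((letter p.1 p.2)⁻¹ * y).norm = y.norm + 1 then r else r⁻¹)
        ≤ ∑ p : Fin n × Bool, ∑ x ∈ B, u x ^ 2 *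
          (if (letter p.1 p.2 * x).norm = x.norm + 1 then r⁻¹ else r) :=
        Finset.sum_le_sum (fun p _ => hple p)
      _ = ∑ x ∈ B, u x ^ 2 *
          (∑ p : Fin n × Bool, if (letter p.1 p.2 * x).norm = x.norm + 1 then r⁻¹ else r) := by
        rw [Finset.sum_comm]
        apply Finset.sum_congr rfl
        intro x _
        rw [Finset.mul_sum]
      _ ≤ ∑ x ∈ B, u x ^ 2 * (2 * r) :=
        Finset.sum_le_sum (fun x _ =>
          mul_le_mul_of_nonneg_left (key_sum hn x) (sq_nonneg _))
      _ = (2 * r) * ∑ x ∈ B, u x ^ 2 := by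
        rw [← Finset.sum_mul]
        ring
  -- put it together
  have hBu : ∑ x ∈ B, u x ^ 2 = ‖elt B φ‖ ^ 2 := by
    rw [norm_elt_sq]
    apply Finset.sum_congr rfl
    intro x hx
    rw [hu]; dsimp only; rw [if_pos hx]
  have hfinal : ‖A (elt B φ)‖ ^ 2 ≤ (2 * r * ‖elt B φ‖) ^ 2 := by
    calc ‖A (elt B φ)‖ ^ 2
        ≤ ∑ y ∈ Y, (∑ p : Fin n × Bool, u ((letter p.1 p.2)⁻¹ * y)) ^ 2 := h2
      _ ≤ ∑ y ∈ Y, (2 * r) * (∑ p : Fin n × Bool, u ((letter p.1 p.2)⁻¹ * y) ^ 2 *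
            (if ((letter p.1 p.2)⁻¹ * y).norm = y.norm + 1 then r else r⁻¹)) :=
        Finset.sum_le_sum (fun y _ => hCS y)
      _ = (2 * r) * ∑ y ∈ Y, ∑ p : Fin n × Bool, u ((letter p.1 p.2)⁻¹ * y) ^ 2 *
            (if ((letter p.1 p.2)⁻¹ * y).norm = y.norm + 1 then r else r⁻¹) := by
        rw [Finset.mul_sum]
      _ ≤ (2 * r) * ((2 * r) * ∑ x ∈ B, u x ^ 2) := by
        apply mul_le_mul_of_nonneg_left h3
        positivity
      _ = (2 * r * ‖elt B φ‖) ^ 2 := by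
        rw [hBu]
        ring
  exact (pow_le_pow_iff_left₀ (norm_nonneg _) (by positivity) (by norm_num : (2:ℕ) ≠ 0)).mp hfinal

/-! ### Global upper bound -/

lemma norm_A_le (hn : 1 ≤ n) (A : H n →L[ℂ] H n)
    (hA : ∀ x : FreeGroup (Fin n),
      A (lp.single 2 x 1) =
        ∑ i : Fin n, (lp.single 2 (FreeGroup.of i * x) 1 +
          lp.single 2 ((FreeGroup.of i)⁻¹ * x) 1)) :
    ‖A‖ ≤ 2 * rK n := by
  apply ContinuousLinearMap.opNorm_le_bound
  · have := rK_pos hn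
    positivity
  intro f
  have hsum := lp.hasSum_single (E := fun _ : FreeGroup (Fin n) => ℂ) (p := 2)
    (by norm_num) f
  have hparts : ∀ B : Finset (FreeGroup (Fin n)),
      (∑ x ∈ B, lp.single 2 x (f x)) = elt B (fun x => f x) := by
    intro B
    rw [elt]
    apply Finset.sum_congr rfl
    intro x _
    have hs : lp.single (E := fun _ : FreeGroup (Fin n) => ℂ) 2 x ((f x : ℂ) • (1 : ℂ))
        = (f x : ℂ) • lp.single (E := fun _ : FreeGroup (Fin n) => ℂ) 2 x 1 :=
      by rw [lp.single_smul]
    simpa [smul_eq_mul] using hs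
  have h1 : Filter.Tendsto (fun B : Finset (FreeGroup (Fin n)) => elt B (fun x => f x))
      Filter.atTop (nhds f) := by
    refine Filter.Tendsto.congr (fun B => hparts B) hsum
  have h2 : Filter.Tendsto (fun B : Finset (FreeGroup (Fin n)) =>
      ‖A (elt B (fun x => f x))‖) Filter.atTop (nhds ‖A f‖) :=
    ((A.continuous.tendsto f).comp h1).norm
  have h3 : Filter.Tendsto (fun B : Finset (FreeGroup (Fin n)) =>
      2 * rK n * ‖elt B (fun x => f x)‖) Filter.atTop (nhds (2 * rK n * ‖f‖)) :=
    h1.norm.const_mul _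
  exact le_of_tendsto_of_tendsto' h2 h3 (fun B => norm_A_elt_le hn A hA B _)

/-! ### Ball sums -/

noncomputable def qR (n : ℕ) : ℝ := 2 * n - 1

lemma one_le_qR (hn : 1 ≤ n) : 1 ≤ qR n := by
  rw [qR]
  have : (1 : ℝ) ≤ n := by exact_mod_cast hn
  linarith

lemma qR_pos (hn : 1 ≤ n) : 0 < qR n := lt_of_lt_of_le one_pos (one_le_qR hn)

lemma rK_sq_eq_qR (hn : 1 ≤ n) : rK n ^ 2 = qR n := by rw [rK_sq hn, qR]

def ballF (n k : ℕ) : Finset (FreeGroup (Fin n)) := (Finset.range (k + 1)).biUnion (sph n)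

lemma mem_ballF {k : ℕ} {x : FreeGroup (Fin n)} : x ∈ ballF n k ↔ x.norm ≤ k := by
  simp [ballF, mem_sph, Nat.lt_succ_iff]

lemma one_mem_ballF {k : ℕ} : (1 : FreeGroup (Fin n)) ∈ ballF n k := by
  rw [mem_ballF, FreeGroup.norm_one]
  exact Nat.zero_le _

lemma sum_sph (j : ℕ) :
    ∑ x ∈ sph n j, (qR n)⁻¹ ^ x.norm = ((sph n j).card : ℝ) * (qR n)⁻¹ ^ j := by
  rw [Finset.sum_congr rfl (g := fun _ => (qR n)⁻¹ ^ j)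
    (fun x hx => by rw [mem_sph.mp hx])]
  rw [Finset.sum_const, nsmul_eq_mul]

lemma sum_range_card (hn : 1 ≤ n) (k : ℕ) :
    ∑ j ∈ Finset.range (k + 1), ((sph n j).card : ℝ) * (qR n)⁻¹ ^ j
      = 1 + k * (2 * n / qR n) := by
  have hq0 : qR n ≠ 0 := (qR_pos hn).ne'
  induction k with
  | zero => simp [card_sph_zero]
  | succ k ih =>
    rw [Finset.sum_range_succ, ih, card_sph_succ]
    have hcast : ((2 * n * (2 * n - 1) ^ k : ℕ) : ℝ) = 2 * n * qR n ^ k := by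
      have h1 : 1 ≤ 2 * n := by omega
      rw [qR]
      push_cast [Nat.cast_sub h1]
      try ring
    rw [hcast]
    have hpow : qR n ^ k * (qR n)⁻¹ ^ (k + 1) = (qR n)⁻¹ := by
      rw [pow_succ, ← mul_assoc, ← mul_pow, mul_inv_cancel₀ hq0, one_pow, one_mul]
    push_cast
    calc 1 + (k : ℝ) * (2 * n / qR n) + 2 * n * qR n ^ k * (qR n)⁻¹ ^ (k + 1)
        = 1 + (k : ℝ) * (2 * n / qR n) + 2 * n * (qR n ^ k * (qR n)⁻¹ ^ (k + 1)) := by ring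
      _ = 1 + ((k : ℝ) + 1) * (2 * n / qR n) := by rw [hpow]; field_simp; ring

lemma sum_ball (hn : 1 ≤ n) (k : ℕ) :
    ∑ x ∈ ballF n k, (qR n)⁻¹ ^ x.norm = 1 + k * (2 * n / qR n) := by
  rw [ballF, Finset.sum_biUnion ?hdisj]
  · rw [Finset.sum_congr rfl (fun j _ => sum_sph j)]
    exact sum_range_card hn k
  case hdisj =>
    intro j1 _ j2 _ hne
    refine Finset.disjoint_left.mpr (fun x h1 h2 => hne ?_)
    rw [← mem_sph.mp h1, ← mem_sph.mp h2]

/-! ### Lower bound -/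

lemma arith_lemma {r β M NA : ℝ} (hr : 0 < r) (hβ : 1 ≤ β) (hM : 1 ≤ M)
    (h : r * (1 + M * β) + r * ((M + 1) * β) ≤ NA * (1 + (M + 1) * β)) :
    2 * r - 2 * r / M ≤ NA := by
  have hM0 : 0 < M := lt_of_lt_of_le one_pos hM
  have hT2 : 0 < 1 + (M + 1) * β := by nlinarith
  have hNA : (r * (1 + M * β) + r * ((M + 1) * β)) / (1 + (M + 1) * β) ≤ NA := by
    rw [div_le_iff₀ hT2]
    linarith
  refine le_trans ?_ hNA
  rw [le_div_iff₀ hT2]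
  have e : 2 * r - 2 * r / M = (2 * r * M - 2 * r) / M := by field_simp
  rw [e, div_mul_eq_mul_div, div_le_iff₀ hM0]
  nlinarith [mul_nonneg (mul_nonneg hr.le (sub_nonneg.2 hβ)) hM0.le, hr.le,
    mul_nonneg hr.le (sub_nonneg.2 hβ)]

lemma lower_bound (hn : 1 ≤ n) (A : H n →L[ℂ] H n)
    (hA : ∀ x : FreeGroup (Fin n),
      A (lp.single 2 x 1) =
        ∑ i : Fin n, (lp.single 2 (FreeGroup.of i * x) 1 +
          lp.single 2 ((FreeGroup.of i)⁻¹ * x) 1))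
    (m : ℕ) (hm : 1 ≤ m) : 2 * rK n - 2 * rK n / m ≤ ‖A‖ := by
  classical
  have hr := rK_pos hn
  have hq := qR_pos hn
  set r := rK n with hrdef
  set q := qR n with hqdef
  set B : Finset (FreeGroup (Fin n)) := ballF n (m + 1) with hB
  set c : FreeGroup (Fin n) → ℝ := fun x => r⁻¹ ^ x.norm with hc
  set φ : FreeGroup (Fin n) → ℂ := fun x => ((c x : ℝ) : ℂ) with hφ
  have hc0 : ∀ x, 0 ≤ c x := fun x => by positivity
  have hcnorm : ∀ x, ‖φ x‖ = c x := fun x => by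
    rw [hφ]
    simp only [Complex.norm_real]
    exact abs_of_nonneg (hc0 x)
  have hrq : r ^ 2 = q := by rw [hrdef, hqdef]; exact rK_sq_eq_qR hn
  have hrmul : (2 * (n : ℝ) - 1) * r⁻¹ = r := by rw [hrdef]; exact rK_mul_inv hn
  have hc2 : ∀ x, c x ^ 2 = q⁻¹ ^ x.norm := fun x => by
    rw [hc]
    dsimp only
    rw [← pow_mul, mul_comm x.norm 2, pow_mul, inv_pow, hrq]
  -- norm of the test vector
  have hFnorm : ‖elt B φ‖ ^ 2 = 1 + ((m : ℝ) + 1) * (2 * n / q) := by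
    rw [norm_elt_sq]
    rw [Finset.sum_congr rfl (fun x _ => by rw [hcnorm x, hc2 x])]
    rw [hB, hqdef, sum_ball hn (m + 1)]
    push_cast
    ring
  -- the inner product as a real double sum
  have hterm : ∀ (p : Fin n × Bool) (x : FreeGroup (Fin n)),
      ⟪elt B φ, φ x • lp.single 2 (letter p.1 p.2 * x) 1⟫ =
      ((c x * (if letter p.1 p.2 * x ∈ B then c (letter p.1 p.2 * x) else 0) : ℝ) : ℂ) := by
    intro p x
    rw [inner_smul_right, inner_elt_single]
    rw [hφ]
    simp only [Complex.conj_ofReal, apply_ite (fun t : ℝ => (t : ℂ)),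
      Complex.ofReal_mul, Complex.ofReal_zero]
  have hinner : ⟪elt B φ, A (elt B φ)⟫ =
      ((∑ p : Fin n × Bool, ∑ x ∈ B,
        c x * (if letter p.1 p.2 * x ∈ B then c (letter p.1 p.2 * x) else 0) : ℝ) : ℂ) := by
    rw [A_elt A hA B φ, inner_sum]
    rw [Finset.sum_congr rfl (fun p _ => by
      rw [inner_sum, Finset.sum_congr rfl (fun x _ => hterm p x)])]
    norm_cast
  -- bound the real sum from above by the operator norm
  set I : ℝ := ∑ p : Fin n × Bool, ∑ x ∈ B,
    c x * (if letter p.1 p.2 * x ∈ B then c (letter p.1 p.2 * x) else 0) with hI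
  have hIle : I ≤ ‖A‖ * ‖elt B φ‖ ^ 2 := by
    have h1 : RCLike.re ⟪elt B φ, A (elt B φ)⟫ ≤ ‖elt B φ‖ * ‖A (elt B φ)‖ :=
      re_inner_le_norm _ _
    rw [hinner] at h1
    replace h1 : I ≤ ‖elt B φ‖ * ‖A (elt B φ)‖ := h1
    refine h1.trans ?_
    have h2 : ‖A (elt B φ)‖ ≤ ‖A‖ * ‖elt B φ‖ := A.le_opNorm _
    calc ‖elt B φ‖ * ‖A (elt B φ)‖ ≤ ‖elt B φ‖ * (‖A‖ * ‖elt B φ‖) :=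
      mul_le_mul_of_nonneg_left h2 (norm_nonneg _)
    _ = ‖A‖ * ‖elt B φ‖ ^ 2 := by ring
  -- bound the real sum from below
  have hterm_nonneg : ∀ (x : FreeGroup (Fin n)) (p : Fin n × Bool),
      0 ≤ c x * (if letter p.1 p.2 * x ∈ B then c (letter p.1 p.2 * x) else 0) := by
    intro x p
    apply mul_nonneg (hc0 x)
    split_ifs
    exacts [hc0 _, le_refl 0]
  have hIge : r * (1 + m * (2 * n / q)) + r * ((m + 1) * (2 * n / q)) ≤ I := by
    rw [hI, Finset.sum_comm]
    have hxlow : ∀ x ∈ B,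
        (if x.norm ≤ m then r * q⁻¹ ^ x.norm else 0) +
        (if x ≠ 1 then r * q⁻¹ ^ x.norm else 0) ≤
        ∑ p : Fin n × Bool,
          c x * (if letter p.1 p.2 * x ∈ B then c (letter p.1 p.2 * x) else 0) := by
      intro x hxB
      have hxm : x.norm ≤ m + 1 := mem_ballF.mp hxB
      rw [← Finset.sum_filter_add_sum_filter_not Finset.univ
        (fun p : Fin n × Bool => (letter p.1 p.2 * x).norm = x.norm + 1)]
      apply add_le_add
      · -- up part
        split_ifs with hxn
        · have hval : ∀ p ∈ Finset.univ.filter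
              (fun p : Fin n × Bool => (letter p.1 p.2 * x).norm = x.norm + 1),
              c x * (if letter p.1 p.2 * x ∈ B then c (letter p.1 p.2 * x) else 0)
                = q⁻¹ ^ x.norm * r⁻¹ := by
            intro p hp
            have hup := (Finset.mem_filter.mp hp).2
            have hmem : letter p.1 p.2 * x ∈ B := by
              rw [hB, mem_ballF, hup]
              omega
            rw [if_pos hmem, hc]
            dsimp only
            rw [hup, ← hrq]
            have hr0 : r ≠ 0 := hr.ne'
            field_simp
            ring_nf
            rw [mul_inv_cancel₀ hr0, one_mul]
          rw [Finset.sum_congr rfl hval, Finset.sum_const, nsmul_eq_mul]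
          -- card ≥ 2n - 1
          have hcard1 : (Finset.univ.filter
              (fun p : Fin n × Bool => ¬ (letter p.1 p.2 * x).norm = x.norm + 1)).card ≤ 1 := by
            apply Finset.card_le_one.mpr
            intro a ha b hb
            rw [Finset.mem_filter] at ha hb
            have := down_letter_unique ha.2 hb.2
            rw [← @Prod.mk.eta _ _ a, ← @Prod.mk.eta _ _ b]
            exact this
          have hcards : (Finset.univ.filter
              (fun p : Fin n × Bool => (letter p.1 p.2 * x).norm = x.norm + 1)).card +
              (Finset.univ.filter
              (fun p : Fin n × Bool => ¬ (letter p.1 p.2 * x).norm = x.norm + 1)).card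
              = 2 * n := by
            rw [Finset.card_filter_add_card_filter_not]
            simp [mul_comm]
          have hcge : (2 * n - 1 : ℕ) ≤ (Finset.univ.filter
              (fun p : Fin n × Bool => (letter p.1 p.2 * x).norm = x.norm + 1)).card := by
            omega
          have hcgeR : (2 * (n : ℝ) - 1) ≤ ((Finset.univ.filter
              (fun p : Fin n × Bool => (letter p.1 p.2 * x).norm = x.norm + 1)).card : ℝ) := by
            have h1 : 1 ≤ 2 * n := by omega
            calc (2 * (n : ℝ) - 1) = ((2 * n - 1 : ℕ) : ℝ) := by
                  push_cast [Nat.cast_sub h1]; ring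
            _ ≤ _ := by exact_mod_cast hcge
          calc r * q⁻¹ ^ x.norm = (2 * (n : ℝ) - 1) * (q⁻¹ ^ x.norm * r⁻¹) := by
                rw [show (2 * (n:ℝ) - 1) * (q⁻¹ ^ x.norm * r⁻¹) =
                  ((2 * (n:ℝ) - 1) * r⁻¹) * q⁻¹ ^ x.norm by ring, hrmul]
          _ ≤ _ := by
              apply mul_le_mul_of_nonneg_right hcgeR
              positivity
        · apply Finset.sum_nonneg
          intro p _
          exact hterm_nonneg x p
      · -- down part
        split_ifs with hx1
        · obtain ⟨i, b, hib⟩ := down_letter_exists hx1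
          have hp0 : (i, b) ∈ Finset.univ.filter
              (fun p : Fin n × Bool => ¬ (letter p.1 p.2 * x).norm = x.norm + 1) := by
            rw [Finset.mem_filter]
            refine ⟨Finset.mem_univ _, ?_⟩
            dsimp only
            omega
          have hval : r * q⁻¹ ^ x.norm =
              c x * (if letter i b * x ∈ B then c (letter i b * x) else 0) := by
            have hmem : letter i b * x ∈ B := by
              rw [hB, mem_ballF]
              omega
            rw [if_pos hmem, hc]
            dsimp only
            have hnx : x.norm = (letter i b * x).norm + 1 := hib.symm
            rw [hnx, ← hrq]
            have hr0 : r ≠ 0 := hr.ne'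
            field_simp
            ring_nf
            rw [pow_two, ← mul_assoc, mul_inv_cancel₀ hr0, one_mul]
          rw [hval]
          exact Finset.single_le_sum (f := fun p : Fin n × Bool =>
            c x * (if letter p.1 p.2 * x ∈ B then c (letter p.1 p.2 * x) else 0))
            (fun p _ => hterm_nonneg x p) hp0
        · apply Finset.sum_nonneg
          intro p _
          exact hterm_nonneg x p
    calc r * (1 + m * (2 * n / q)) + r * ((m + 1) * (2 * n / q))
        = ∑ x ∈ B, ((if x.norm ≤ m then r * q⁻¹ ^ x.norm else 0) +
          (if x ≠ 1 then r * q⁻¹ ^ x.norm else 0)) := by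
          rw [Finset.sum_add_distrib]
          congr 1
          · -- first piece
            rw [← Finset.sum_filter]
            have hfil : B.filter (fun x => x.norm ≤ m) = ballF n m := by
              ext x
              simp only [Finset.mem_filter, hB, mem_ballF]
              constructor
              · rintro ⟨-, h⟩; exact h
              · intro h; exact ⟨by omega, h⟩
            rw [hfil, ← Finset.mul_sum, sum_ball hn m]
          · -- second piece
            rw [← Finset.sum_filter, Finset.filter_ne']
            rw [Finset.sum_erase_eq_sub (one_mem_ballF (k := m + 1))]
            rw [← Finset.mul_sum, sum_ball hn (m + 1), FreeGroup.norm_one, pow_zero, mul_one]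
            push_cast
            ring
      _ ≤ _ := Finset.sum_le_sum hxlow
  -- final arithmetic
  have hβ : 1 ≤ 2 * (n : ℝ) / q := by
    rw [le_div_iff₀ hq, one_mul, hqdef, qR]
    linarith
  have hM : (1 : ℝ) ≤ (m : ℝ) := by exact_mod_cast hm
  refine arith_lemma hr hβ hM ?_
  rw [← hFnorm]
  calc r * (1 + (m : ℝ) * (2 * n / q)) + r * (((m : ℝ) + 1) * (2 * n / q)) ≤ I := by
        have := hIge
        push_cast at this ⊢
        linarith
    _ ≤ ‖A‖ * ‖elt B φ‖ ^ 2 := hIle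

end Kesten

/-- Kesten: Let `F_n` be the free group on `n ≥ 1` generators and
let `A = λ(𝟏_S)` be the operator on `ℓ²(F_n)` given by convolution with the
indicator of `S = {s₁^{±1},…,s_n^{±1}}`, i.e. `A δ_x = Σᵢ (δ_{sᵢx} + δ_{sᵢ⁻¹x})`.
Then `‖A‖ = 2√(2n−1)`. -/
theorem stmt18 (n : ℕ) (hn : 1 ≤ n)
    (A : lp (fun _ : FreeGroup (Fin n) => ℂ) 2 →L[ℂ] lp (fun _ : FreeGroup (Fin n) => ℂ) 2)
    (hA : ∀ x : FreeGroup (Fin n),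
      A (lp.single 2 x 1) =
        ∑ i : Fin n, (lp.single 2 (FreeGroup.of i * x) 1 +
          lp.single 2 ((FreeGroup.of i)⁻¹ * x) 1)) :
    ‖A‖ = 2 * Real.sqrt (2 * n - 1) := by
  have hupper := Kesten.norm_A_le hn A hA
  have hlower : 2 * Kesten.rK n ≤ ‖A‖ := by
    have htend : Filter.Tendsto (fun m : ℕ => 2 * Kesten.rK n - 2 * Kesten.rK n / m)
        Filter.atTop (nhds (2 * Kesten.rK n)) := by
      have h0 := tendsto_const_div_atTop_nhds_zero_nat (2 * Kesten.rK n)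
      simpa using Filter.Tendsto.sub tendsto_const_nhds h0
    refine le_of_tendsto htend ?_
    filter_upwards [Filter.eventually_ge_atTop 1] with m hm
    exact Kesten.lower_bound hn A hA m hm
  have heq : ‖A‖ = 2 * Kesten.rK n := le_antisymm hupper hlower
  rw [heq, Kesten.rK]
end
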